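/- arXiv:2406.06047 — 5 statements merged into one kernel-verified Lean document; each statement's English description precedes it below -/
import Mathlib

section
/- Pointwise covariance of the lapse-Wick-rotated ADM metric under foliation-changing diffeomorphisms (Proposition 1, matrix form): let θ ∈ ℝ, let (N, n, ĝ) be real ADM data, let J be a Jacobian, and assume D_θ² ≠ 0, so the lapse-Wick-rotated primed triple (λ'_θ, n'_θ, ĝ'^θ) is defined. Then Jᵀ · A(−1, λ'_θ, n'_θ, ĝ'^θ) · J = A(−1, e^{−2iθ}N², n, ĝ), where J is regarded as a complex matrix. In words: the complex metric obtained by applying the Wick rotation N ↦ e^{−iθ}N in a fiducial foliation and then transporting the ADM triple to a new foliation by the (complexified, signature −) transformation law represents the same complex bilinear form as the Wick-rotated metric in the fiducial foliation. -/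
open Matrix Complex BigOperators

noncomputable section

/-- The ADM matrix `A(ε, λ, n, ĝ)` representing the line element
`ε λ dt² + ĝ_{ab}(dx^a + n^a dt)(dx^b + n^b dt)`. -/
def ADM {R : Type*} [CommRing R] {d : ℕ} (ε lam : R) (n : Fin d → R)
    (g : Matrix (Fin d) (Fin d) R) : Matrix (Fin (d+1)) (Fin (d+1)) R :=
  Matrix.of fun i j =>
    Fin.cases
      (Fin.cases (ε * lam + ∑ a, ∑ b, g a b * n a * n b)
        (fun a => ∑ b, g a b * n b) j)
      (fun a => Fin.cases (∑ b, g a b * n b) (fun b => g a b) j) i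

variable {d : ℕ}

/-- Block `τ = ∂t'/∂t` of a Jacobian. -/
def tauJ (J : Matrix (Fin (d+1)) (Fin (d+1)) ℝ) : ℝ := J 0 0

/-- Block `σ_c = ∂t'/∂x^c` of a Jacobian. -/
def sigJ (J : Matrix (Fin (d+1)) (Fin (d+1)) ℝ) : Fin d → ℝ := fun c => J 0 c.succ

/-- Block `ρ^a = ∂x'^a/∂t` of a Jacobian. -/
def rhoJ (J : Matrix (Fin (d+1)) (Fin (d+1)) ℝ) : Fin d → ℝ := fun a => J a.succ 0

/-- Block `X^a_c = ∂x'^a/∂x^c` of a Jacobian. -/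
def XJ (J : Matrix (Fin (d+1)) (Fin (d+1)) ℝ) : Matrix (Fin d) (Fin d) ℝ :=
  Matrix.of fun a c => J a.succ c.succ

/-- Block `k_a = (J⁻¹)₀ₐ` of the inverse Jacobian. -/
def kJ (J : Matrix (Fin (d+1)) (Fin (d+1)) ℝ) : Fin d → ℝ := fun a => J⁻¹ 0 a.succ

/-- Block `K^c_a = (J⁻¹)_{ca}` of the inverse Jacobian. -/
def KJ (J : Matrix (Fin (d+1)) (Fin (d+1)) ℝ) : Matrix (Fin d) (Fin d) ℝ :=
  Matrix.of fun c a => J⁻¹ c.succ a.succ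

/-- `C = τ - Σ_c σ_c n^c`. -/
def CJ (J : Matrix (Fin (d+1)) (Fin (d+1)) ℝ) (n : Fin d → ℝ) : ℝ :=
  tauJ J - ∑ c, sigJ J c * n c

/-- `σᵀ ĝ⁻¹ σ`. -/
def sgsJ (J : Matrix (Fin (d+1)) (Fin (d+1)) ℝ) (g : Matrix (Fin d) (Fin d) ℝ) : ℝ :=
  ∑ c, ∑ e, sigJ J c * g⁻¹ c e * sigJ J e

/-- `(X ĝ⁻¹ σ)^a`. -/
def Xgs (J : Matrix (Fin (d+1)) (Fin (d+1)) ℝ) (g : Matrix (Fin d) (Fin d) ℝ) :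
    Fin d → ℝ := fun a => ∑ c, ∑ e, XJ J a c * g⁻¹ c e * sigJ J e

/-- `(ρ - X n)^a`. -/
def rXn (J : Matrix (Fin (d+1)) (Fin (d+1)) ℝ) (n : Fin d → ℝ) : Fin d → ℝ :=
  fun a => rhoJ J a - ∑ c, XJ J a c * n c

/-- `D_ε² = C² + ε N² σᵀĝ⁻¹σ`. -/
def Deps2 (J : Matrix (Fin (d+1)) (Fin (d+1)) ℝ) (ε N : ℝ) (n : Fin d → ℝ)
    (g : Matrix (Fin d) (Fin d) ℝ) : ℝ :=
  (CJ J n)^2 + ε * N^2 * sgsJ J g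

/-- transf_ε primed squared lapse `N'² = N²/D_ε²`. -/
def NP2 (J : Matrix (Fin (d+1)) (Fin (d+1)) ℝ) (ε N : ℝ) (n : Fin d → ℝ)
    (g : Matrix (Fin d) (Fin d) ℝ) : ℝ := N^2 / Deps2 J ε N n g

/-- transf_ε primed shift `n'^a`. -/
def shiftP (J : Matrix (Fin (d+1)) (Fin (d+1)) ℝ) (ε N : ℝ) (n : Fin d → ℝ)
    (g : Matrix (Fin d) (Fin d) ℝ) : Fin d → ℝ := fun a =>
  -((rXn J n a) * CJ J n + ε * N^2 * Xgs J g a) / Deps2 J ε N n g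

/-- transf_ε primed spatial metric `ĝ'_{ab}`. -/
def ghP (J : Matrix (Fin (d+1)) (Fin (d+1)) ℝ) (ε N : ℝ) (n : Fin d → ℝ)
    (g : Matrix (Fin d) (Fin d) ℝ) : Matrix (Fin d) (Fin d) ℝ :=
  Matrix.of fun a b =>
    (∑ c, ∑ e, (KJ J c a + kJ J a * n c) * (KJ J e b + kJ J b * n e) * g c e)
    + ε * N^2 * kJ J a * kJ J b

/-- The Wick phase `e^{-2iθ}`. -/
def wick (θ : ℝ) : ℂ := Complex.exp (-2 * Complex.I * θ)

/-- `D_θ² = C² - e^{-2iθ} N² σᵀĝ⁻¹σ`. -/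
def Dth2 (J : Matrix (Fin (d+1)) (Fin (d+1)) ℝ) (θ N : ℝ) (n : Fin d → ℝ)
    (g : Matrix (Fin d) (Fin d) ℝ) : ℂ :=
  (CJ J n : ℂ)^2 - wick θ * (N:ℂ)^2 * (sgsJ J g : ℂ)

/-- lapse-Wick-rotated primed squared lapse `λ'_θ = e^{-2iθ}N²/D_θ²`. -/
def lamW (J : Matrix (Fin (d+1)) (Fin (d+1)) ℝ) (θ N : ℝ) (n : Fin d → ℝ)
    (g : Matrix (Fin d) (Fin d) ℝ) : ℂ :=
  wick θ * (N:ℂ)^2 / Dth2 J θ N n g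

/-- lapse-Wick-rotated primed shift `n'_θ{}^a`. -/
def shiftW (J : Matrix (Fin (d+1)) (Fin (d+1)) ℝ) (θ N : ℝ) (n : Fin d → ℝ)
    (g : Matrix (Fin d) (Fin d) ℝ) : Fin d → ℂ := fun a =>
  -((rXn J n a : ℂ) * (CJ J n : ℂ) - wick θ * (N:ℂ)^2 * (Xgs J g a : ℂ)) / Dth2 J θ N n g

/-- lapse-Wick-rotated primed spatial metric `(ĝ'^θ)_{ab}`. -/
def ghW (J : Matrix (Fin (d+1)) (Fin (d+1)) ℝ) (θ N : ℝ) (n : Fin d → ℝ)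
    (g : Matrix (Fin d) (Fin d) ℝ) : Matrix (Fin d) (Fin d) ℂ :=
  Matrix.of fun a b =>
    ((∑ c, ∑ e, (KJ J c a + kJ J a * n c) * (KJ J e b + kJ J b * n e) * g c e : ℝ) : ℂ)
    - wick θ * (N:ℂ)^2 * (kJ J a : ℂ) * (kJ J b : ℂ)

/-! The matrix `M := J⁻ᵀ A J⁻¹`, with `A` the Wick-rotated fiducial ADM matrix, is symmetric, and a
symmetric matrix is the ADM matrix `A(ε, λ, n, h)` with `h` its spatial block exactly when it maps
`(1, -n)` to `(ελ, 0)`. The spatial block of `M` is `ĝ'` by the transformation law. The vector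
`y := J⁻¹ (1, -n')` is explicitly `(C, ελ ĝ⁻¹σ - C n) / D²`, and `A y = ελ' (τ, σ)` is a multiple
of the row `dt'` of `J`, so `M (1, -n') = ελ' e₀`. The computation never uses reality or signs, so
it is done over an arbitrary field and then specialised to `ℂ`, `ε = -1`, `λ = e^{-2iθ} N²`. -/

section ADMAlgebra

variable {R : Type*} [CommRing R]

lemma dotProduct_succ (u v : Fin (d+1) → R) : u ⬝ᵥ v = u 0 * v 0 + Fin.tail u ⬝ᵥ Fin.tail v :=
  Fin.sum_univ_succ _

lemma mulVec_cons_apply (M : Matrix (Fin (d+1)) (Fin (d+1)) R) (a : R) (v : Fin d → R)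
    (i : Fin (d+1)) : (M *ᵥ Fin.cons a v) i = M i 0 * a + Fin.tail (M i) ⬝ᵥ v := by
  rw [mulVec, dotProduct_succ, Fin.cons_zero, Fin.tail_cons]

lemma transpose_mul_mul_apply {m : Type*} [Fintype m] (A B : Matrix m m R) (i j : m) :
    (Bᵀ * A * B) i j = Bᵀ i ⬝ᵥ (A *ᵥ Bᵀ j) := by
  rw [dotProduct_mulVec]; rfl

def spatialComp (n : Fin d → R) (u : Fin (d+1) → R) : Fin d → R := Fin.tail u + u 0 • n

lemma ADM_mulVec_zero (ε lam : R) (n : Fin d → R) (h : Matrix (Fin d) (Fin d) R)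
    (u : Fin (d+1) → R) :
    (ADM ε lam n h *ᵥ u) 0 = ε * lam * u 0 + (h *ᵥ n) ⬝ᵥ spatialComp n u := by
  simp only [mulVec, dotProduct, Fin.sum_univ_succ, ADM, of_apply, Fin.cases_zero,
    Fin.cases_succ, spatialComp, Fin.tail, Pi.add_apply, Pi.smul_apply, smul_eq_mul,
    Finset.sum_mul, mul_add, add_mul, Finset.sum_add_distrib]
  have hnn : ∑ a, ∑ b, h a b * n a * n b * u 0 = ∑ a, ∑ b, h a b * n b * (u 0 * n a) :=
    Finset.sum_congr rfl fun _ _ => Finset.sum_congr rfl fun _ _ => by ring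
  rw [hnn]
  ring

lemma ADM_mulVec_succ (ε lam : R) (n : Fin d → R) (h : Matrix (Fin d) (Fin d) R)
    (u : Fin (d+1) → R) (a : Fin d) :
    (ADM ε lam n h *ᵥ u) a.succ = (h *ᵥ spatialComp n u) a := by
  simp only [mulVec, dotProduct, Fin.sum_univ_succ, ADM, of_apply, Fin.cases_zero,
    Fin.cases_succ, spatialComp, Fin.tail, Pi.add_apply, Pi.smul_apply, smul_eq_mul,
    mul_add, Finset.sum_add_distrib, Finset.sum_mul]
  rw [add_comm]
  exact congrArg _ (Finset.sum_congr rfl fun _ _ => by ring)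

lemma dotProduct_ADM_mulVec (ε lam : R) (n : Fin d → R) {h : Matrix (Fin d) (Fin d) R}
    (hh : h.IsSymm) (u v : Fin (d+1) → R) :
    u ⬝ᵥ (ADM ε lam n h *ᵥ v)
      = ε * lam * u 0 * v 0 + spatialComp n u ⬝ᵥ (h *ᵥ spatialComp n v) := by
  have hn : (h *ᵥ n) ⬝ᵥ spatialComp n v = n ⬝ᵥ (h *ᵥ spatialComp n v) := by
    rw [dotProduct_comm, dotProduct_mulVec, ← mulVec_transpose, hh.eq, dotProduct_comm]
  have htail : Fin.tail (ADM ε lam n h *ᵥ v) = h *ᵥ spatialComp n v :=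
    funext (ADM_mulVec_succ ε lam n h v)
  rw [dotProduct_succ, ADM_mulVec_zero, htail, hn]
  simp only [spatialComp, add_dotProduct, smul_dotProduct, smul_eq_mul]
  ring

lemma ADM_isSymm (ε lam : R) (n : Fin d → R) {h : Matrix (Fin d) (Fin d) R}
    (hh : h.IsSymm) : (ADM ε lam n h).IsSymm := by
  ext i j
  refine Fin.cases (Fin.cases ?_ (fun b => ?_) j) (fun a => Fin.cases ?_ (fun b => ?_) j) i <;>
    simp only [ADM, transpose_apply, of_apply, Fin.cases_zero, Fin.cases_succ]
  exact hh.apply a b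

lemma ADM_submatrix_eq_of_mulVec {M : Matrix (Fin (d+1)) (Fin (d+1)) R} (hM : M.IsSymm)
    {ε lam : R} {n : Fin d → R} (hv : M *ᵥ Fin.cons 1 (-n) = Pi.single 0 (ε * lam)) :
    ADM ε lam n (M.submatrix Fin.succ Fin.succ) = M := by
  have hrow (i : Fin (d+1)) :
      M i 0 = (Pi.single 0 (ε * lam) : Fin (d+1) → R) i + Fin.tail (M i) ⬝ᵥ n := by
    rw [← hv, mulVec_cons_apply, dotProduct_neg]; ring
  have hcol (a : Fin d) : M a.succ 0 = ∑ b, M a.succ b.succ * n b := by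
    rw [hrow, Pi.single_eq_of_ne (Fin.succ_ne_zero a), zero_add]; rfl
  ext i j
  refine Fin.cases (Fin.cases ?_ (fun b => ?_) j) (fun a => Fin.cases ?_ (fun b => ?_) j) i <;>
    simp only [ADM, of_apply, Fin.cases_zero, Fin.cases_succ, submatrix_apply]
  · rw [hrow 0, Pi.single_eq_same]
    simp only [dotProduct, Fin.tail, ← hM.apply 0, hcol, Finset.sum_mul]
    exact congrArg _ (Finset.sum_congr rfl fun _ _ => Finset.sum_congr rfl fun _ _ => by ring)
  · rw [← hcol, hM.apply]
  · rw [hcol]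

end ADMAlgebra

section Transformation

variable {F : Type*} [Field F] (J : Matrix (Fin (d+1)) (Fin (d+1)) F) (ε lam : F)
  (n : Fin d → F) (h : Matrix (Fin d) (Fin d) F)

def normalTimeRate : F := J 0 0 - Fin.tail (J 0) ⬝ᵥ n

def lapseDenom : F :=
  normalTimeRate J n ^ 2 + ε * lam * (Fin.tail (J 0) ⬝ᵥ (h⁻¹ *ᵥ Fin.tail (J 0)))

def primeLapse : F := lam / lapseDenom J ε lam n h

def primeShift : Fin d → F := fun a =>
  -((J a.succ 0 - Fin.tail (J a.succ) ⬝ᵥ n) * normalTimeRate J n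
      + ε * lam * (Fin.tail (J a.succ) ⬝ᵥ (h⁻¹ *ᵥ Fin.tail (J 0)))) / lapseDenom J ε lam n h

def primeMetric : Matrix (Fin d) (Fin d) F := of fun a b =>
  spatialComp n (J⁻¹ᵀ a.succ) ⬝ᵥ (h *ᵥ spatialComp n (J⁻¹ᵀ b.succ))
    + ε * lam * J⁻¹ 0 a.succ * J⁻¹ 0 b.succ

-- `J⁻¹ (1, -n')`: the primed slices' lapse-scaled normal, in unprimed components.
def primeNormal : Fin (d+1) → F :=
  Fin.cons (normalTimeRate J n / lapseDenom J ε lam n h)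
    ((ε * lam / lapseDenom J ε lam n h) • (h⁻¹ *ᵥ Fin.tail (J 0))
      - (normalTimeRate J n / lapseDenom J ε lam n h) • n)

lemma mulVec_primeNormal (hD : lapseDenom J ε lam n h ≠ 0) :
    J *ᵥ primeNormal J ε lam n h = Fin.cons 1 (-primeShift J ε lam n h) := by
  ext i
  refine Fin.cases ?_ (fun a => ?_) i <;>
    simp only [primeNormal, mulVec_cons_apply, dotProduct_sub, dotProduct_smul, smul_eq_mul,
      Fin.cons_zero, Fin.cons_succ, Pi.neg_apply, primeShift]
  · rw [lapseDenom, normalTimeRate] at hD ⊢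
    field_simp
    ring
  · field_simp
    ring

lemma spatialComp_primeNormal :
    spatialComp n (primeNormal J ε lam n h)
      = (ε * lam / lapseDenom J ε lam n h) • (h⁻¹ *ᵥ Fin.tail (J 0)) := by
  simp only [spatialComp, primeNormal, Fin.tail_cons, Fin.cons_zero, sub_add_cancel]

lemma ADM_mulVec_primeNormal (hh : h.IsSymm) (hhu : IsUnit h.det) :
    ADM ε lam n h *ᵥ primeNormal J ε lam n h = (ε * primeLapse J ε lam n h) • J 0 := by
  have hhinv : h *ᵥ (h⁻¹ *ᵥ Fin.tail (J 0)) = Fin.tail (J 0) := by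
    rw [mulVec_mulVec, mul_nonsing_inv h hhu, one_mulVec]
  ext i
  refine Fin.cases ?_ (fun a => ?_) i
  · rw [ADM_mulVec_zero, spatialComp_primeNormal, dotProduct_smul, dotProduct_comm,
      dotProduct_mulVec, ← mulVec_transpose, hh.eq, hhinv]
    simp only [primeNormal, primeLapse, normalTimeRate, Fin.cons_zero, Pi.smul_apply,
      smul_eq_mul]
    ring
  · rw [ADM_mulVec_succ, spatialComp_primeNormal, mulVec_smul, hhinv]
    simp only [primeLapse, Pi.smul_apply, smul_eq_mul, Fin.tail]
    ring

theorem transpose_mul_ADM_prime_mul (hJ : IsUnit J.det) (hh : h.IsSymm) (hhu : IsUnit h.det)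
    (hD : lapseDenom J ε lam n h ≠ 0) :
    Jᵀ * ADM ε (primeLapse J ε lam n h) (primeShift J ε lam n h) (primeMetric J ε lam n h) * J
      = ADM ε lam n h := by
  set A := ADM ε lam n h
  set M := J⁻¹ᵀ * A * J⁻¹ with hM
  have hMsymm : M.IsSymm := by
    rw [IsSymm, hM, transpose_mul, transpose_mul, transpose_transpose,
      (ADM_isSymm ε lam n hh).eq, Matrix.mul_assoc]
  have hMnormal : M *ᵥ Fin.cons 1 (-primeShift J ε lam n h)
      = Pi.single 0 (ε * primeLapse J ε lam n h) := by
    have hnormal : J⁻¹ *ᵥ Fin.cons 1 (-primeShift J ε lam n h) = primeNormal J ε lam n h := by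
      rw [← mulVec_primeNormal J ε lam n h hD, mulVec_mulVec, nonsing_inv_mul J hJ, one_mulVec]
    have hrow : J⁻¹ᵀ *ᵥ J 0 = Pi.single 0 1 := by
      rw [mulVec_transpose, ← mul_apply_eq_vecMul, mul_nonsing_inv J hJ]
      ext i
      simp [one_apply, Pi.single_apply, eq_comm]
    rw [hM, ← mulVec_mulVec, ← mulVec_mulVec, hnormal, ADM_mulVec_primeNormal J ε lam n h hh hhu,
      mulVec_smul, hrow, ← Pi.single_smul, smul_eq_mul, mul_one]
  have hMspatial : M.submatrix Fin.succ Fin.succ = primeMetric J ε lam n h := by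
    ext a b
    rw [submatrix_apply, hM, transpose_mul_mul_apply, dotProduct_ADM_mulVec ε lam n hh,
      primeMetric, of_apply, add_comm]
    rfl
  rw [← hMspatial, ADM_submatrix_eq_of_mulVec hMsymm hMnormal, hM, ← Matrix.mul_assoc,
    ← Matrix.mul_assoc, ← transpose_mul, nonsing_inv_mul J hJ, transpose_one, Matrix.one_mul,
    Matrix.mul_assoc, nonsing_inv_mul J hJ, Matrix.mul_one]

end Transformation

lemma map_nonsing_inv {m R S : Type*} [Fintype m] [DecidableEq m] [CommRing R] [CommRing S]
    (f : R →+* S) {A : Matrix m m R} (hA : IsUnit A.det) : (A.map f)⁻¹ = A⁻¹.map f :=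
  inv_eq_left_inv <| by
    rw [← Matrix.map_mul, nonsing_inv_mul A hA, Matrix.map_one f f.map_zero f.map_one]

section Complexification

variable {m : Type*} [Fintype m]

lemma map_ofReal_inv [DecidableEq m] {A : Matrix m m ℝ} (hA : IsUnit A.det) :
    (A.map ofReal)⁻¹ = A⁻¹.map ofReal :=
  map_nonsing_inv ofRealHom hA

lemma isUnit_det_map_ofReal [DecidableEq m] {A : Matrix m m ℝ} (hA : IsUnit A.det) :
    IsUnit (A.map ofReal).det :=
  ofRealHom.map_det A ▸ hA.map ofRealHom

lemma ofReal_dotProduct (u v : m → ℝ) :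
    ((u ⬝ᵥ v : ℝ) : ℂ) = (fun i => (u i : ℂ)) ⬝ᵥ fun i => (v i : ℂ) :=
  ofRealHom.map_dotProduct u v

lemma ofReal_dotProduct_mulVec (u v : m → ℝ) (A : Matrix m m ℝ) :
    ((u ⬝ᵥ (A *ᵥ v) : ℝ) : ℂ)
      = (fun i => (u i : ℂ)) ⬝ᵥ (A.map ofReal *ᵥ fun i => (v i : ℂ)) := by
  rw [ofReal_dotProduct]
  congr 1
  exact funext fun i => ofRealHom.map_mulVec A v i

variable (J : Matrix (Fin (d+1)) (Fin (d+1)) ℝ) (θ N : ℝ) (n : Fin d → ℝ)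
  {g : Matrix (Fin d) (Fin d) ℝ}

lemma tail_map_ofReal (i : Fin (d+1)) :
    Fin.tail ((J.map ofReal) i) = fun c => (Fin.tail (J i) c : ℂ) := rfl

lemma CJ_eq : CJ J n = J 0 0 - Fin.tail (J 0) ⬝ᵥ n := rfl

lemma rXn_eq (a : Fin d) : rXn J n a = J a.succ 0 - Fin.tail (J a.succ) ⬝ᵥ n := rfl

lemma sgsJ_eq : sgsJ J g = Fin.tail (J 0) ⬝ᵥ (g⁻¹ *ᵥ Fin.tail (J 0)) := by
  simp only [sgsJ, dotProduct, mulVec, Finset.mul_sum, mul_assoc, sigJ, Fin.tail]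

lemma Xgs_eq (a : Fin d) : Xgs J g a = Fin.tail (J a.succ) ⬝ᵥ (g⁻¹ *ᵥ Fin.tail (J 0)) := by
  simp only [Xgs, XJ, of_apply, dotProduct, mulVec, Finset.mul_sum, mul_assoc, sigJ, Fin.tail]

lemma lapseDenom_map (hg : IsUnit g.det) :
    lapseDenom (J.map ofReal) (-1) (wick θ * N ^ 2) (fun a => (n a : ℂ)) (g.map ofReal)
      = Dth2 J θ N n g := by
  rw [Dth2, sgsJ_eq, ofReal_dotProduct_mulVec, CJ_eq, ofReal_sub, ofReal_dotProduct, lapseDenom,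
    normalTimeRate, map_ofReal_inv hg, tail_map_ofReal, map_apply]
  ring

lemma primeLapse_map (hg : IsUnit g.det) :
    primeLapse (J.map ofReal) (-1) (wick θ * N ^ 2) (fun a => (n a : ℂ)) (g.map ofReal)
      = lamW J θ N n g := by
  rw [primeLapse, lapseDenom_map J θ N n hg, lamW]

lemma primeShift_map (hg : IsUnit g.det) :
    primeShift (J.map ofReal) (-1) (wick θ * N ^ 2) (fun a => (n a : ℂ)) (g.map ofReal)
      = shiftW J θ N n g := by
  ext a
  rw [shiftW, Xgs_eq, ofReal_dotProduct_mulVec, rXn_eq, CJ_eq, ofReal_sub, ofReal_sub,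
    ofReal_dotProduct, ofReal_dotProduct, primeShift, lapseDenom_map J θ N n hg, normalTimeRate,
    map_ofReal_inv hg, tail_map_ofReal, tail_map_ofReal, map_apply, map_apply]
  ring

lemma KJ_kJ_sum_eq (a b : Fin d) :
    ∑ c, ∑ e, (KJ J c a + kJ J a * n c) * (KJ J e b + kJ J b * n e) * g c e
      = spatialComp n (J⁻¹ᵀ a.succ) ⬝ᵥ (g *ᵥ spatialComp n (J⁻¹ᵀ b.succ)) := by
  simp only [dotProduct, mulVec, Finset.mul_sum]
  exact Finset.sum_congr rfl fun c _ => Finset.sum_congr rfl fun e _ => by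
    simp only [spatialComp, KJ, kJ, of_apply, Pi.add_apply, Pi.smul_apply, smul_eq_mul, Fin.tail,
      transpose_apply]
    ring

lemma primeMetric_map (hJ : IsUnit J.det) :
    primeMetric (J.map ofReal) (-1) (wick θ * N ^ 2) (fun a => (n a : ℂ)) (g.map ofReal)
      = ghW J θ N n g := by
  have hframe (a : Fin d) : spatialComp (fun c => (n c : ℂ)) ((J.map ofReal)⁻¹ᵀ a.succ)
      = fun c => ((spatialComp n (J⁻¹ᵀ a.succ) c : ℝ) : ℂ) := by
    ext c
    simp [spatialComp, map_ofReal_inv hJ, Fin.tail]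
  ext a b
  rw [primeMetric, ghW, of_apply, of_apply, hframe, hframe, KJ_kJ_sum_eq,
    ofReal_dotProduct_mulVec, map_ofReal_inv hJ, map_apply, map_apply, kJ, kJ]
  ring

end Complexification

theorem lapse_wick_covariance_general (d : ℕ) (θ : ℝ)
    (N : ℝ) (n : Fin d → ℝ)
    (g : Matrix (Fin d) (Fin d) ℝ) (hgs : g.IsSymm) (hg : g.PosDef)
    (J : Matrix (Fin (d+1)) (Fin (d+1)) ℝ) (hJ : IsUnit J.det)
    (hD : Dth2 J θ N n g ≠ 0) :
    (J.map Complex.ofReal)ᵀ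
        * ADM (-1 : ℂ) (lamW J θ N n g) (shiftW J θ N n g) (ghW J θ N n g)
        * (J.map Complex.ofReal)
      = ADM (-1 : ℂ) (wick θ * (N:ℂ)^2) (fun a => (n a : ℂ)) (g.map Complex.ofReal) := by
  have hgu : IsUnit g.det := hg.det_pos.ne'.isUnit
  rw [← primeLapse_map J θ N n hgu, ← primeShift_map J θ N n hgu, ← primeMetric_map J θ N n hJ]
  exact transpose_mul_ADM_prime_mul _ _ _ _ _ (isUnit_det_map_ofReal hJ) (hgs.map ofReal)
    (isUnit_det_map_ofReal hgu) (by rwa [lapseDenom_map J θ N n hgu])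

/-- Proposition 1 (matrix form): covariance of the lapse-Wick-rotated ADM metric
under foliation-changing diffeomorphisms. -/
theorem lapse_wick_covariance (d : ℕ) (hd : 1 ≤ d) (θ : ℝ)
    (N : ℝ) (hN : 0 < N) (n : Fin d → ℝ)
    (g : Matrix (Fin d) (Fin d) ℝ) (hgs : g.IsSymm) (hg : g.PosDef)
    (J : Matrix (Fin (d+1)) (Fin (d+1)) ℝ) (hJ : IsUnit J.det)
    (hD : Dth2 J θ N n g ≠ 0) :
    (J.map Complex.ofReal)ᵀ
        * ADM (-1 : ℂ) (lamW J θ N n g) (shiftW J θ N n g) (ghW J θ N n g)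
        * (J.map Complex.ofReal)
      = ADM (-1 : ℂ) (wick θ * (N:ℂ)^2) (fun a => (n a : ℂ)) (g.map Complex.ofReal) :=
  lapse_wick_covariance_general d θ N n g hgs hg J hJ hD
end
end

section
/- Rank-one perturbation formula for the inverse lapse-Wick-rotated metric in an arbitrary foliation (Eqs. (2.24)–(2.25), matrix form): let θ ∈ ℝ, ε ∈ {−1,+1}, let (N, n, ĝ) be real ADM data, let J be a Jacobian, and assume D_ε² ≠ 0 and D_θ² ≠ 0, so the transf_ε-primed triple (N'², n', ĝ') and the lapse-Wick-rotated primed triple (λ'_θ, n'_θ, ĝ'^θ) are defined. Let m' := J·(1, −n¹, …, −n^d)ᵀ ∈ ℝ^{d+1} (explicitly m'⁰ = C and m'^a = (ρ − Xn)^a). Then the complex matrices A(−1, λ'_θ, n'_θ, ĝ'^θ) and A(ε, N'², n', ĝ') are invertible and A(−1, λ'_θ, n'_θ, ĝ'^θ)⁻¹ = A(ε, N'², n', ĝ')⁻¹ − (ε + e^{2iθ}) N^{−2} m' m'ᵀ. -/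
open Matrix Complex BigOperators

noncomputable section

variable {d : ℕ}

namespace LWR

variable {d : ℕ}

def gC (g : Matrix (Fin d) (Fin d) ℝ) : Matrix (Fin d) (Fin d) ℂ := g.map Complex.ofReal
def giC (g : Matrix (Fin d) (Fin d) ℝ) : Matrix (Fin d) (Fin d) ℂ := (g⁻¹).map Complex.ofReal
def JC (J : Matrix (Fin (d+1)) (Fin (d+1)) ℝ) : Matrix (Fin (d+1)) (Fin (d+1)) ℂ :=
  J.map Complex.ofReal
def KC (J : Matrix (Fin (d+1)) (Fin (d+1)) ℝ) : Matrix (Fin (d+1)) (Fin (d+1)) ℂ :=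
  (J⁻¹).map Complex.ofReal
def vC (J : Matrix (Fin (d+1)) (Fin (d+1)) ℝ) : Fin (d+1) → ℂ := fun i => KC J 0 i
def wC (J : Matrix (Fin (d+1)) (Fin (d+1)) ℝ) (n : Fin d → ℝ) : Fin d → Fin (d+1) → ℂ :=
  fun c i => KC J c.succ i + (n c : ℂ) * KC J 0 i
def m0C (n : Fin d → ℝ) : Fin (d+1) → ℂ := Fin.cases 1 (fun a => -(n a : ℂ))
def mC (J : Matrix (Fin (d+1)) (Fin (d+1)) ℝ) (n : Fin d → ℝ) : Fin (d+1) → ℂ :=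
  (JC J).mulVec (m0C n)
def sC (J : Matrix (Fin (d+1)) (Fin (d+1)) ℝ) : Fin d → ℂ := fun c => (J 0 c.succ : ℂ)
def XCm (J : Matrix (Fin (d+1)) (Fin (d+1)) ℝ) : Matrix (Fin d) (Fin d) ℂ :=
  Matrix.of fun a c => (J a.succ c.succ : ℂ)
def sgsC (J : Matrix (Fin (d+1)) (Fin (d+1)) ℝ) (g : Matrix (Fin d) (Fin d) ℝ) : ℂ :=
  sC J ⬝ᵥ (giC g *ᵥ sC J)
def XgsC (J : Matrix (Fin (d+1)) (Fin (d+1)) ℝ) (g : Matrix (Fin d) (Fin d) ℝ) : Fin d → ℂ :=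
  (XCm J) *ᵥ (giC g *ᵥ sC J)
def kvC (J : Matrix (Fin (d+1)) (Fin (d+1)) ℝ) : Fin d → ℂ := fun a => KC J 0 a.succ
def Wsp (J : Matrix (Fin (d+1)) (Fin (d+1)) ℝ) (n : Fin d → ℝ) : Matrix (Fin d) (Fin d) ℂ :=
  Matrix.of fun c a => wC J n c a.succ
def w0 (J : Matrix (Fin (d+1)) (Fin (d+1)) ℝ) (n : Fin d → ℝ) : Fin d → ℂ :=
  fun c => wC J n c 0
def msC (J : Matrix (Fin (d+1)) (Fin (d+1)) ℝ) (n : Fin d → ℝ) : Fin d → ℂ :=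
  fun a => mC J n a.succ

variable (J : Matrix (Fin (d+1)) (Fin (d+1)) ℝ) (n : Fin d → ℝ)
  (g : Matrix (Fin d) (Fin d) ℝ)

lemma map_mul_ofReal {m : ℕ} (A B : Matrix (Fin m) (Fin m) ℝ) :
    (A * B).map Complex.ofReal = A.map Complex.ofReal * B.map Complex.ofReal := by
  ext i j
  simp [Matrix.mul_apply, Matrix.map_apply]

lemma map_one_ofReal {m : ℕ} :
    ((1 : Matrix (Fin m) (Fin m) ℝ)).map Complex.ofReal = 1 := by
  ext i j
  by_cases h : i = j <;> simp [Matrix.map_apply, Matrix.one_apply, h]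

lemma hJKC (hJ : IsUnit J.det) : JC J * KC J = 1 := by
  rw [JC, KC, ← map_mul_ofReal, Matrix.mul_nonsing_inv J hJ, map_one_ofReal]

lemma hKJC (hJ : IsUnit J.det) : KC J * JC J = 1 := by
  rw [JC, KC, ← map_mul_ofReal, Matrix.nonsing_inv_mul J hJ, map_one_ofReal]

lemma mC_zero : mC J n 0 = (CJ J n : ℂ) := by
  simp [mC, Matrix.mulVec, dotProduct, Fin.sum_univ_succ, m0C, JC, CJ, tauJ, sigJ,
    Matrix.map_apply]
  push_cast
  ring

lemma mC_succ (a : Fin d) : mC J n a.succ = (rXn J n a : ℂ) := by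
  simp [mC, Matrix.mulVec, dotProduct, Fin.sum_univ_succ, m0C, JC, rXn, rhoJ, XJ,
    Matrix.map_apply]
  push_cast
  ring


lemma KC_mulVec_mC (hJ : IsUnit J.det) : (KC J).mulVec (mC J n) = m0C n := by
  rw [mC, Matrix.mulVec_mulVec, hKJC J hJ, Matrix.one_mulVec]

lemma rowK_m (hJ : IsUnit J.det) (r : Fin (d+1)) :
    ∑ i, KC J r i * mC J n i = m0C n r := by
  have := congrFun (KC_mulVec_mC J n hJ) r
  simpa [Matrix.mulVec, dotProduct] using this

lemma rowKJ (hJ : IsUnit J.det) (r ν : Fin (d+1)) :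
    ∑ i, KC J r i * JC J i ν = (1 : Matrix (Fin (d+1)) (Fin (d+1)) ℂ) r ν := by
  have := congrFun (congrFun (hKJC J hJ) r) ν
  simpa [Matrix.mul_apply] using this

lemma rowJK (hJ : IsUnit J.det) (r ν : Fin (d+1)) :
    ∑ i, JC J r i * KC J i ν = (1 : Matrix (Fin (d+1)) (Fin (d+1)) ℂ) r ν := by
  have := congrFun (congrFun (hJKC J hJ) r) ν
  simpa [Matrix.mul_apply] using this

lemma sC_eq (c : Fin d) : sC J c = JC J 0 c.succ := by simp [sC, JC]

lemma CC_eq : (CJ J n : ℂ) = JC J 0 0 - ∑ c : Fin d, sC J c * (n c : ℂ) := by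
  have : (CJ J n : ℂ) = (tauJ J : ℂ) - ∑ c : Fin d, (sigJ J c : ℂ) * (n c : ℂ) := by
    push_cast [CJ]; ring
  rw [this]
  simp [tauJ, sigJ, sC, JC]

lemma sum_w_m (hJ : IsUnit J.det) (c : Fin d) :
    ∑ i, wC J n c i * mC J n i = 0 := by
  simp only [wC, add_mul, Finset.sum_add_distrib, mul_assoc, ← Finset.mul_sum]
  rw [rowK_m J n hJ, rowK_m J n hJ]
  simp [m0C]

lemma sum_w_J (hJ : IsUnit J.det) (c : Fin d) (ν : Fin (d+1)) :
    ∑ i, wC J n c i * JC J i ν =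
      (1 : Matrix (Fin (d+1)) (Fin (d+1)) ℂ) c.succ ν
        + (n c : ℂ) * (1 : Matrix (Fin (d+1)) (Fin (d+1)) ℂ) 0 ν := by
  simp only [wC, add_mul, Finset.sum_add_distrib, mul_assoc, ← Finset.mul_sum]
  rw [rowKJ J hJ, rowKJ J hJ]

lemma sum_s_w (hJ : IsUnit J.det) (ν : Fin (d+1)) :
    ∑ c : Fin d, sC J c * wC J n c ν =
      (1 : Matrix (Fin (d+1)) (Fin (d+1)) ℂ) 0 ν - (CJ J n : ℂ) * KC J 0 ν := by
  have h0 := rowJK J hJ 0 ν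
  rw [Fin.sum_univ_succ] at h0
  have e1 : ∀ c : Fin d, sC J c * wC J n c ν
      = JC J 0 c.succ * KC J c.succ ν + (sC J c * (n c : ℂ)) * KC J 0 ν := by
    intro c; simp only [wC, sC_eq]; ring
  simp only [e1, Finset.sum_add_distrib]
  rw [← Finset.sum_mul, CC_eq]
  linear_combination h0

lemma V1 (hJ : IsUnit J.det) : Wsp J n *ᵥ msC J n = (-(CJ J n : ℂ)) • w0 J n := by
  funext c
  have h := sum_w_m J n hJ c
  rw [Fin.sum_univ_succ, mC_zero] at h
  simp only [Matrix.mulVec, dotProduct, Wsp, Matrix.of_apply, msC, Pi.smul_apply,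
    smul_eq_mul, w0]
  linear_combination h

lemma V2 (hJ : IsUnit J.det) :
    kvC J ⬝ᵥ msC J n = 1 - vC J 0 * (CJ J n : ℂ) := by
  have h := rowK_m J n hJ 0
  rw [Fin.sum_univ_succ, mC_zero] at h
  simp only [m0C, Fin.cases_zero] at h
  simp only [dotProduct, kvC, msC, vC]
  linear_combination h

lemma V3 (hJ : IsUnit J.det) :
    Wsp J n * XCm J = 1 - Matrix.vecMulVec (w0 J n) (sC J) := by
  ext c f
  have h := sum_w_J J n hJ c f.succ
  rw [Fin.sum_univ_succ] at h
  have h1 : (1 : Matrix (Fin (d+1)) (Fin (d+1)) ℂ) c.succ f.succ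
      = (1 : Matrix (Fin d) (Fin d) ℂ) c f := by
    simp [Matrix.one_apply, Fin.succ_inj]
  have h2 : (1 : Matrix (Fin (d+1)) (Fin (d+1)) ℂ) 0 f.succ = 0 := by
    simp [Matrix.one_apply, (Fin.succ_ne_zero f).symm]
  rw [h1, h2] at h
  have e1 : ∀ b : Fin d, JC J b.succ f.succ = XCm J b f := by
    intro b; simp [JC, XCm]
  have e0 : JC J 0 f.succ = sC J f := by simp [JC, sC]
  rw [e0] at h
  simp only [e1] at h
  simp only [Matrix.mul_apply, Matrix.sub_apply, Matrix.vecMulVec_apply, Wsp, Matrix.of_apply,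
    w0]
  linear_combination h

lemma V4 (hJ : IsUnit J.det) :
    kvC J ᵥ* XCm J = (-(vC J 0)) • sC J := by
  funext f
  have h := rowKJ J hJ 0 f.succ
  rw [Fin.sum_univ_succ] at h
  have h2 : (1 : Matrix (Fin (d+1)) (Fin (d+1)) ℂ) 0 f.succ = 0 := by
    simp [Matrix.one_apply, (Fin.succ_ne_zero f).symm]
  rw [h2] at h
  have e1 : ∀ b : Fin d, JC J b.succ f.succ = XCm J b f := by
    intro b; simp [JC, XCm]
  have e0 : JC J 0 f.succ = sC J f := by simp [JC, sC]
  rw [e0] at h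
  simp only [e1] at h
  simp only [Matrix.vecMul, dotProduct, kvC, Pi.smul_apply, smul_eq_mul, vC]
  linear_combination h

lemma V6 (hJ : IsUnit J.det) :
    sC J ᵥ* Wsp J n = (-(CJ J n : ℂ)) • kvC J := by
  funext b
  have h := sum_s_w J n hJ b.succ
  have h2 : (1 : Matrix (Fin (d+1)) (Fin (d+1)) ℂ) 0 b.succ = 0 := by
    simp [Matrix.one_apply, (Fin.succ_ne_zero b).symm]
  rw [h2] at h
  simp only [Matrix.vecMul, dotProduct, Wsp, Matrix.of_apply, Pi.smul_apply,
    smul_eq_mul, kvC]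
  linear_combination h

lemma V7 (hJ : IsUnit J.det) :
    sC J ⬝ᵥ w0 J n = 1 - (CJ J n : ℂ) * vC J 0 := by
  have h := sum_s_w J n hJ 0
  have h2 : (1 : Matrix (Fin (d+1)) (Fin (d+1)) ℂ) 0 0 = 1 := by simp
  rw [h2] at h
  simp only [dotProduct, w0, vC]
  linear_combination h


def nCv (n : Fin d → ℝ) : Fin d → ℂ := fun a => (n a : ℂ)

def A0C (n : Fin d → ℝ) (g : Matrix (Fin d) (Fin d) ℝ) (μ : ℂ) :
    Matrix (Fin (d+1)) (Fin (d+1)) ℂ := ADM 1 μ (nCv n) (gC g)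

def B0C (n : Fin d → ℝ) (g : Matrix (Fin d) (Fin d) ℝ) (μ : ℂ) :
    Matrix (Fin (d+1)) (Fin (d+1)) ℂ :=
  Matrix.of fun i j =>
    Fin.cases
      (Fin.cases μ⁻¹ (fun b => -(μ⁻¹ * nCv n b)) j)
      (fun a => Fin.cases (-(μ⁻¹ * nCv n a))
        (fun b => giC g a b + μ⁻¹ * nCv n a * nCv n b) j) i

variable (μ : ℂ)

lemma hgdet (hg : g.PosDef) : IsUnit g.det := isUnit_iff_ne_zero.2 (ne_of_gt hg.det_pos)

lemma hggiE (hg : g.PosDef) (c f : Fin d) :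
    ∑ e, gC g c e * giC g e f = if c = f then 1 else 0 := by
  have h : g * g⁻¹ = 1 := Matrix.mul_nonsing_inv g (hgdet g hg)
  have := congrFun (congrFun (congrArg (fun M => M.map Complex.ofReal) h) c) f
  simp only [map_mul_ofReal, map_one_ofReal] at this
  rw [Matrix.mul_apply] at this
  simpa [gC, giC, Matrix.one_apply] using this

lemma hgigE (hg : g.PosDef) (c f : Fin d) :
    ∑ e, giC g c e * gC g e f = if c = f then 1 else 0 := by
  have h : g⁻¹ * g = 1 := Matrix.nonsing_inv_mul g (hgdet g hg)
  have := congrFun (congrFun (congrArg (fun M => M.map Complex.ofReal) h) c) f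
  simp only [map_mul_ofReal, map_one_ofReal] at this
  rw [Matrix.mul_apply] at this
  simpa [gC, giC, Matrix.one_apply] using this

lemma gC_symmE (hgs : g.IsSymm) (a b : Fin d) : gC g a b = gC g b a := by
  simp [gC, hgs.apply]

lemma gi_symm (hgs : g.IsSymm) : (g⁻¹).IsSymm := by
  rw [Matrix.IsSymm, Matrix.transpose_nonsing_inv, hgs.eq]

lemma giC_symmE (hgs : g.IsSymm) (a b : Fin d) : giC g a b = giC g b a := by
  simp [giC, (gi_symm g hgs).apply]

lemma helper1 (hg : g.PosDef) (hgs : g.IsSymm) (b : Fin d) :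
    ∑ a, (∑ e, gC g a e * nCv n e) * giC g a b = nCv n b := by
  have step0 : ∑ a, (∑ e, gC g a e * nCv n e) * giC g a b
      = ∑ a : Fin d, ∑ e : Fin d, giC g b a * gC g a e * nCv n e := by
    apply Finset.sum_congr rfl; intro a _
    rw [Finset.sum_mul]
    apply Finset.sum_congr rfl; intro e _
    rw [giC_symmE g hgs a b]; ring
  have step1 : ∑ e : Fin d, ∑ a : Fin d, giC g b a * gC g a e * nCv n e
      = ∑ e, (∑ a, giC g b a * gC g a e) * nCv n e := by
    apply Finset.sum_congr rfl; intro e _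
    rw [Finset.sum_mul]
  rw [step0, Finset.sum_comm, step1]
  simp [hgigE g hg b, ite_mul]

lemma A0_mul_B0 (hg : g.PosDef) (hgs : g.IsSymm) (hμ : μ ≠ 0) :
    A0C n g μ * B0C n g μ = 1 := by
  ext i j
  rw [Matrix.mul_apply, Fin.sum_univ_succ]
  induction i using Fin.cases with
  | zero =>
    induction j using Fin.cases with
    | zero =>
      simp only [A0C, B0C, ADM, Matrix.of_apply, Fin.cases_zero, Fin.cases_succ,
        Matrix.one_apply_eq]
      have h1 : ∑ a : Fin d, (∑ e, gC g a e * nCv n e) * -(μ⁻¹ * nCv n a)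
          = -(μ⁻¹) * ∑ a : Fin d, ∑ e, gC g a e * nCv n a * nCv n e := by
        rw [Finset.mul_sum]
        apply Finset.sum_congr rfl; intro a _
        rw [Finset.sum_mul, Finset.mul_sum]
        apply Finset.sum_congr rfl; intro e _; ring
      rw [h1]
      field_simp
      ring
    | succ b =>
      have hne : (0 : Fin (d+1)) ≠ b.succ := (Fin.succ_ne_zero b).symm
      simp only [A0C, B0C, ADM, Matrix.of_apply, Fin.cases_zero, Fin.cases_succ,
        Matrix.one_apply_ne hne]
      have h1 : ∑ a : Fin d, (∑ e, gC g a e * nCv n e)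
            * (giC g a b + μ⁻¹ * nCv n a * nCv n b)
          = (∑ a : Fin d, (∑ e, gC g a e * nCv n e) * giC g a b)
            + μ⁻¹ * nCv n b * ∑ a : Fin d, ∑ e, gC g a e * nCv n a * nCv n e := by
        simp only [mul_add, Finset.sum_add_distrib]
        congr 1
        rw [Finset.mul_sum]
        apply Finset.sum_congr rfl; intro a _
        rw [Finset.sum_mul, Finset.mul_sum]
        apply Finset.sum_congr rfl; intro e _; ring
      rw [h1, helper1 n g hg hgs b]
      field_simp
      ring
  | succ a =>
    induction j using Fin.cases with
    | zero =>
      have hne : (a.succ : Fin (d+1)) ≠ 0 := Fin.succ_ne_zero a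
      simp only [A0C, B0C, ADM, Matrix.of_apply, Fin.cases_zero, Fin.cases_succ,
        Matrix.one_apply_ne hne]
      have h1 : ∑ b : Fin d, gC g a b * -(μ⁻¹ * nCv n b)
          = -(μ⁻¹) * ∑ b : Fin d, gC g a b * nCv n b := by
        rw [Finset.mul_sum]
        apply Finset.sum_congr rfl; intro b _; ring
      rw [h1]
      field_simp
      ring
    | succ b =>
      have hsj : (1 : Matrix (Fin (d+1)) (Fin (d+1)) ℂ) a.succ b.succ
          = if a = b then 1 else 0 := by
        simp [Matrix.one_apply, Fin.succ_inj]
      simp only [A0C, B0C, ADM, Matrix.of_apply, Fin.cases_zero, Fin.cases_succ, hsj]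
      have h1 : ∑ c : Fin d, gC g a c * (giC g c b + μ⁻¹ * nCv n c * nCv n b)
          = (∑ c : Fin d, gC g a c * giC g c b)
            + μ⁻¹ * nCv n b * ∑ c : Fin d, gC g a c * nCv n c := by
        simp only [mul_add, Finset.sum_add_distrib]
        congr 1
        rw [Finset.mul_sum]
        apply Finset.sum_congr rfl; intro c _; ring
      rw [h1, hggiE g hg a b]
      ring


def PC (n : Fin d → ℝ) : Matrix (Fin (d+1)) (Fin (d+1)) ℂ :=
  Matrix.of fun i j =>
    Fin.cases (Fin.cases (1:ℂ) (fun _ => 0) j)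
      (fun a => Fin.cases (nCv n a) (fun b => if a = b then 1 else 0) j) i

def DgC (g : Matrix (Fin d) (Fin d) ℝ) (μ : ℂ) : Matrix (Fin (d+1)) (Fin (d+1)) ℂ :=
  Matrix.of fun i j =>
    Fin.cases (Fin.cases μ (fun _ => 0) j)
      (fun a => Fin.cases 0 (fun b => gC g a b) j) i

def MC (J : Matrix (Fin (d+1)) (Fin (d+1)) ℝ) (n : Fin d → ℝ) (g : Matrix (Fin d) (Fin d) ℝ)
    (μ : ℂ) : Matrix (Fin (d+1)) (Fin (d+1)) ℂ :=
  Matrix.of fun i j =>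
    μ * vC J i * vC J j + ∑ a, ∑ b, wC J n a i * gC g a b * wC J n b j

lemma DgC_mul (R : Matrix (Fin (d+1)) (Fin (d+1)) ℂ) (j : Fin (d+1)) :
    (DgC g μ * R) 0 j = μ * R 0 j
      ∧ ∀ a : Fin d, (DgC g μ * R) a.succ j = ∑ b, gC g a b * R b.succ j := by
  constructor
  · rw [Matrix.mul_apply, Fin.sum_univ_succ]
    simp [DgC]
  · intro a
    rw [Matrix.mul_apply, Fin.sum_univ_succ]
    simp [DgC]

lemma sandwichDg (R : Matrix (Fin (d+1)) (Fin (d+1)) ℂ) (i j : Fin (d+1)) :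
    (Rᵀ * DgC g μ * R) i j
      = μ * R 0 i * R 0 j + ∑ a, ∑ b, R a.succ i * gC g a b * R b.succ j := by
  rw [Matrix.mul_assoc, Matrix.mul_apply, Fin.sum_univ_succ]
  simp only [Matrix.transpose_apply]
  rw [(DgC_mul g μ R j).1]
  have e1 : ∀ a : Fin d, R a.succ i * (DgC g μ * R) a.succ j
      = ∑ b, R a.succ i * gC g a b * R b.succ j := by
    intro a
    rw [(DgC_mul g μ R j).2 a, Finset.mul_sum]
    apply Finset.sum_congr rfl; intro b _; ring
  simp only [e1]
  ring

lemma PC00 : PC n 0 0 = 1 := rfl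
lemma PC0s (b : Fin d) : PC n 0 b.succ = 0 := by simp [PC]
lemma PCs0 (a : Fin d) : PC n a.succ 0 = nCv n a := by simp [PC]
lemma PCss (a b : Fin d) : PC n a.succ b.succ = if a = b then 1 else 0 := by simp [PC]

lemma A0_factor (hgs : g.IsSymm) : A0C n g μ = (PC n)ᵀ * DgC g μ * PC n := by
  ext i j
  rw [sandwichDg]
  induction i using Fin.cases with
  | zero =>
    induction j using Fin.cases with
    | zero =>
      simp only [A0C, ADM, Matrix.of_apply, Fin.cases_zero, PC00, PCs0]
      have e1 : ∑ a : Fin d, ∑ b : Fin d, nCv n a * gC g a b * nCv n b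
          = ∑ a : Fin d, ∑ b : Fin d, gC g a b * nCv n a * nCv n b := by
        apply Finset.sum_congr rfl; intro a _
        apply Finset.sum_congr rfl; intro b _; ring
      rw [e1]; ring
    | succ b =>
      simp only [A0C, ADM, Matrix.of_apply, Fin.cases_zero, Fin.cases_succ, PC00, PC0s,
        PCs0, PCss]
      have e1 : ∀ a : Fin d, ∑ c : Fin d, nCv n a * gC g a c * (if c = b then (1:ℂ) else 0)
          = nCv n a * gC g a b := by
        intro a
        simp [mul_ite, Finset.sum_ite_eq']
      simp only [e1]
      have e2 : ∑ a : Fin d, nCv n a * gC g a b = ∑ e : Fin d, gC g b e * nCv n e := by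
        apply Finset.sum_congr rfl; intro a _
        rw [gC_symmE g hgs a b]; ring
      rw [e2]; ring
  | succ a =>
    induction j using Fin.cases with
    | zero =>
      simp only [A0C, ADM, Matrix.of_apply, Fin.cases_zero, Fin.cases_succ, PC00, PC0s,
        PCs0, PCss]
      have e1 : ∑ c : Fin d, ∑ b : Fin d,
            (if c = a then (1:ℂ) else 0) * gC g c b * nCv n b
          = ∑ b : Fin d, ∑ c : Fin d,
            (if c = a then (1:ℂ) else 0) * gC g c b * nCv n b := Finset.sum_comm
      rw [e1]
      have e2 : ∀ b : Fin d, ∑ c : Fin d,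
            (if c = a then (1:ℂ) else 0) * gC g c b * nCv n b
          = gC g a b * nCv n b := by
        intro b
        simp [ite_mul, Finset.sum_ite_eq']
      simp only [e2]
      ring
    | succ b =>
      simp only [A0C, ADM, Matrix.of_apply, Fin.cases_succ, PC00, PC0s, PCs0, PCss]
      have e2 : ∀ c : Fin d, ∑ e : Fin d,
            (if c = a then (1:ℂ) else 0) * gC g c e * (if e = b then (1:ℂ) else 0)
          = (if c = a then (1:ℂ) else 0) * gC g c b := by
        intro c
        simp [mul_ite, Finset.sum_ite_eq']
      simp only [e2]
      simp [ite_mul, Finset.sum_ite_eq']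

lemma PK_row0 (i : Fin (d+1)) : (PC n * KC J) 0 i = vC J i := by
  rw [Matrix.mul_apply, Fin.sum_univ_succ]
  simp [PC, vC]

lemma PK_rowsucc (c : Fin d) (i : Fin (d+1)) : (PC n * KC J) c.succ i = wC J n c i := by
  rw [Matrix.mul_apply, Fin.sum_univ_succ]
  simp only [PC, Matrix.of_apply, Fin.cases_succ, Fin.cases_zero]
  have : ∀ b : Fin d, (if c = b then (1:ℂ) else 0) * KC J b.succ i
      = if c = b then KC J b.succ i else 0 := by
    intro b; by_cases h : c = b <;> simp [h]
  simp only [this, Finset.sum_ite_eq]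
  simp [wC, nCv]
  ring

lemma L2a (hgs : g.IsSymm) (hJ : IsUnit J.det) :
    (KC J)ᵀ * A0C n g μ * KC J = MC J n g μ := by
  rw [A0_factor n g μ hgs]
  have : (KC J)ᵀ * ((PC n)ᵀ * DgC g μ * PC n) * KC J
      = (PC n * KC J)ᵀ * DgC g μ * (PC n * KC J) := by
    rw [Matrix.transpose_mul]
    noncomm_ring
  rw [this]
  ext i j
  rw [sandwichDg]
  simp only [PK_row0, PK_rowsucc, MC, Matrix.of_apply]


def DC2 (J : Matrix (Fin (d+1)) (Fin (d+1)) ℝ) (n : Fin d → ℝ) (g : Matrix (Fin d) (Fin d) ℝ)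
    (μ : ℂ) : ℂ := ((CJ J n : ℂ))^2 + μ * sgsC J g

def nPr (J : Matrix (Fin (d+1)) (Fin (d+1)) ℝ) (n : Fin d → ℝ) (g : Matrix (Fin d) (Fin d) ℝ)
    (μ : ℂ) : Fin d → ℂ :=
  fun a => -((mC J n a.succ) * (CJ J n : ℂ) + μ * XgsC J g a) / DC2 J n g μ

def gPr (J : Matrix (Fin (d+1)) (Fin (d+1)) ℝ) (n : Fin d → ℝ) (g : Matrix (Fin d) (Fin d) ℝ)
    (μ : ℂ) : Matrix (Fin d) (Fin d) ℂ :=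
  Matrix.of fun a b =>
    (∑ c, ∑ e, wC J n c a.succ * gC g c e * wC J n e b.succ) + μ * kvC J a * kvC J b

lemma ggiC (hg : g.PosDef) : gC g * giC g = 1 := by
  rw [gC, giC, ← map_mul_ofReal, Matrix.mul_nonsing_inv g (hgdet g hg), map_one_ofReal]

lemma gCsymmM (hgs : g.IsSymm) : (gC g)ᵀ = gC g := by
  ext a b; simp [gC, Matrix.transpose_apply, hgs.apply]

lemma vvmul (u v x : Fin d → ℂ) : Matrix.vecMulVec u v *ᵥ x = (v ⬝ᵥ x) • u := by
  funext i
  simp only [Matrix.mulVec, dotProduct, Matrix.vecMulVec_apply, Pi.smul_apply,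
    smul_eq_mul, Finset.sum_mul]
  exact Finset.sum_congr rfl fun j _ => by ring

lemma bridge1 (x y : Fin d → ℂ) :
    ∑ c, ∑ e, x c * gC g c e * y e = x ⬝ᵥ (gC g *ᵥ y) := by
  simp only [dotProduct, Matrix.mulVec, Finset.mul_sum]
  apply Finset.sum_congr rfl; intro c _
  apply Finset.sum_congr rfl; intro e _; ring

lemma gPr_eq : gPr J n g μ
    = (Wsp J n)ᵀ * gC g * Wsp J n + μ • Matrix.vecMulVec (kvC J) (kvC J) := by
  ext a b
  simp only [gPr, Matrix.of_apply, Matrix.add_apply, Matrix.smul_apply,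
    Matrix.vecMulVec_apply, smul_eq_mul]
  congr 1
  · rw [Matrix.mul_assoc, Matrix.mul_apply]
    have : ∀ c : Fin d, (Wsp J n)ᵀ a c * (gC g * Wsp J n) c b
        = ∑ e, wC J n c a.succ * gC g c e * wC J n e b.succ := by
      intro c
      rw [Matrix.mul_apply, Matrix.transpose_apply, Finset.mul_sum]
      apply Finset.sum_congr rfl; intro e _
      simp [Wsp]; ring
    simp only [this]
  · ring

lemma nPr_eq : nPr J n g μ
    = (-(DC2 J n g μ)⁻¹) • ((CJ J n : ℂ) • msC J n + μ • XgsC J g) := by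
  funext a
  simp only [nPr, Pi.smul_apply, Pi.add_apply, smul_eq_mul, msC, div_eq_mul_inv]
  ring

lemma hWXgs (hJ : IsUnit J.det) :
    Wsp J n *ᵥ XgsC J g = giC g *ᵥ sC J - sgsC J g • w0 J n := by
  rw [XgsC, Matrix.mulVec_mulVec, V3 J n hJ, Matrix.sub_mulVec, Matrix.one_mulVec, vvmul]
  rfl

lemma hgg (hg : g.PosDef) : gC g *ᵥ (giC g *ᵥ sC J) = sC J := by
  rw [Matrix.mulVec_mulVec, ggiC g hg, Matrix.one_mulVec]

lemma hkXgs (hJ : IsUnit J.det) :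
    kvC J ⬝ᵥ XgsC J g = -(vC J 0 * sgsC J g) := by
  rw [XgsC, Matrix.dotProduct_mulVec, V4 J hJ]
  simp only [smul_dotProduct, smul_eq_mul, sgsC]
  ring

lemma key1v (hJ : IsUnit J.det) (hg : g.PosDef) (hgs : g.IsSymm)
    (hD : DC2 J n g μ ≠ 0) :
    gPr J n g μ *ᵥ nPr J n g μ
      = (μ * vC J 0) • kvC J + ((Wsp J n)ᵀ * gC g) *ᵥ w0 J n := by
  set C : ℂ := (CJ J n : ℂ) with hC
  set Q : Fin d → ℂ := ((Wsp J n)ᵀ * gC g) *ᵥ w0 J n with hQ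
  have hDC : DC2 J n g μ = C^2 + μ * sgsC J g := by rw [hC]; rfl
  have hD' : C^2 + μ * sgsC J g ≠ 0 := by rw [← hDC]; exact hD
  have hWms : Wsp J n *ᵥ (C • msC J n) = (C * -C) • w0 J n := by
    rw [Matrix.mulVec_smul, V1 J n hJ, ← hC, smul_smul]
  have h1 : ((Wsp J n)ᵀ * gC g * Wsp J n) *ᵥ (C • msC J n) = (C * -C) • Q := by
    rw [← Matrix.mulVec_mulVec, hWms, Matrix.mulVec_smul, ← hQ]
  have hWXgs' : Wsp J n *ᵥ (μ • XgsC J g)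
      = μ • (giC g *ᵥ sC J) - (μ * sgsC J g) • w0 J n := by
    rw [Matrix.mulVec_smul, hWXgs J n g hJ, smul_sub, smul_smul]
  have e : ((Wsp J n)ᵀ * gC g) *ᵥ (giC g *ᵥ sC J) = (-C) • kvC J := by
    rw [← Matrix.mulVec_mulVec, hgg J g hg, Matrix.mulVec_transpose, V6 J n hJ, ← hC]
  have h2 : ((Wsp J n)ᵀ * gC g * Wsp J n) *ᵥ (μ • XgsC J g)
      = (μ * -C) • kvC J + (μ * -(sgsC J g)) • Q := by
    rw [← Matrix.mulVec_mulVec, hWXgs', Matrix.mulVec_sub, Matrix.mulVec_smul,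
      Matrix.mulVec_smul, e, ← hQ]
    funext b
    simp only [Pi.sub_apply, Pi.add_apply, Pi.smul_apply, smul_eq_mul]
    ring
  have h3 : (μ • Matrix.vecMulVec (kvC J) (kvC J)) *ᵥ (C • msC J n + μ • XgsC J g)
      = (μ * (C * (1 - vC J 0 * C) + μ * -(vC J 0 * sgsC J g))) • kvC J := by
    rw [Matrix.smul_mulVec, vvmul, dotProduct_add, dotProduct_smul,
      dotProduct_smul, V2 J n hJ, hkXgs J g hJ, ← hC, smul_smul]
    simp only [smul_eq_mul]
  have expand : gPr J n g μ *ᵥ nPr J n g μ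
      = (-(DC2 J n g μ)⁻¹) • (((Wsp J n)ᵀ * gC g * Wsp J n) *ᵥ (C • msC J n)
        + ((Wsp J n)ᵀ * gC g * Wsp J n) *ᵥ (μ • XgsC J g)
        + (μ • Matrix.vecMulVec (kvC J) (kvC J)) *ᵥ (C • msC J n + μ • XgsC J g)) := by
    rw [gPr_eq, nPr_eq, Matrix.mulVec_smul, ← hC]
    congr 1
    rw [Matrix.add_mulVec, Matrix.mulVec_add]
  rw [expand, h1, h2, h3, hDC]
  funext b
  simp only [Pi.smul_apply, Pi.add_apply, smul_eq_mul]
  field_simp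
  ring

lemma key1c (hJ : IsUnit J.det) (hg : g.PosDef) (hgs : g.IsSymm)
    (hD : DC2 J n g μ ≠ 0) (b : Fin d) :
    ∑ e, gPr J n g μ b e * nPr J n g μ e
      = μ * vC J 0 * kvC J b + ∑ c, ∑ e, wC J n c b.succ * gC g c e * wC J n e 0 := by
  have h := congrFun (key1v J n g μ hJ hg hgs hD) b
  have hl : (gPr J n g μ *ᵥ nPr J n g μ) b = ∑ e, gPr J n g μ b e * nPr J n g μ e := rfl
  have hr : (((Wsp J n)ᵀ * gC g) *ᵥ w0 J n) b
      = ∑ c, ∑ e, wC J n c b.succ * gC g c e * wC J n e 0 := by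
    simp only [Matrix.mulVec, dotProduct, Matrix.mul_apply, Finset.sum_mul]
    rw [Finset.sum_comm]
    apply Finset.sum_congr rfl; intro c _
    apply Finset.sum_congr rfl; intro e _
    simp [Wsp, w0]
  simp only [Pi.add_apply, Pi.smul_apply, smul_eq_mul] at h
  rw [hr, hl] at h
  linear_combination h


lemma symm_dd (hgs : g.IsSymm) (x y : Fin d → ℂ) :
    ∑ a, ∑ b, x a * gC g a b * y b = ∑ a, ∑ b, y a * gC g a b * x b := by
  rw [Finset.sum_comm]
  apply Finset.sum_congr rfl; intro b _
  apply Finset.sum_congr rfl; intro a _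
  rw [gC_symmE g hgs a b]; ring

lemma vecMul_gC (hgs : g.IsSymm) (x : Fin d → ℂ) : x ᵥ* gC g = gC g *ᵥ x := by
  rw [← gCsymmM g hgs, Matrix.vecMul_transpose]
  rw [gCsymmM g hgs]

lemma key2 (hJ : IsUnit J.det) (hg : g.PosDef) (hgs : g.IsSymm)
    (hD : DC2 J n g μ ≠ 0) :
    1 * (μ / DC2 J n g μ)
        + ∑ a, ∑ b, gPr J n g μ a b * nPr J n g μ a * nPr J n g μ b
      = μ * vC J 0 * vC J 0 + ∑ a, ∑ b, wC J n a 0 * gC g a b * wC J n b 0 := by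
  set C : ℂ := (CJ J n : ℂ) with hC
  have hDC : DC2 J n g μ = C^2 + μ * sgsC J g := by rw [hC]; rfl
  have hD' : C^2 + μ * sgsC J g ≠ 0 := by rw [← hDC]; exact hD
  have hdd : ∑ a, ∑ b, gPr J n g μ a b * nPr J n g μ a * nPr J n g μ b
      = nPr J n g μ ⬝ᵥ (gPr J n g μ *ᵥ nPr J n g μ) := by
    simp only [dotProduct, Matrix.mulVec, Finset.mul_sum]
    apply Finset.sum_congr rfl; intro a _
    apply Finset.sum_congr rfl; intro b _
    ring
  have hWms : Wsp J n *ᵥ (C • msC J n) = (C * -C) • w0 J n := by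
    rw [Matrix.mulVec_smul, V1 J n hJ, ← hC, smul_smul]
  have hWXgs' : Wsp J n *ᵥ (μ • XgsC J g)
      = μ • (giC g *ᵥ sC J) - (μ * sgsC J g) • w0 J n := by
    rw [Matrix.mulVec_smul, hWXgs J n g hJ, smul_sub, smul_smul]
  have hWn : Wsp J n *ᵥ nPr J n g μ
      = (-(DC2 J n g μ)⁻¹) • ((C * -C) • w0 J n
          + (μ • (giC g *ᵥ sC J) - (μ * sgsC J g) • w0 J n)) := by
    rw [nPr_eq, Matrix.mulVec_smul, ← hC, Matrix.mulVec_add, hWms, hWXgs']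
  have hk : nPr J n g μ ⬝ᵥ kvC J
      = -(DC2 J n g μ)⁻¹ * (C * (1 - vC J 0 * C) + μ * -(vC J 0 * sgsC J g)) := by
    rw [nPr_eq, ← hC, smul_dotProduct, add_dotProduct,
      smul_dotProduct, smul_dotProduct,
      dotProduct_comm (msC J n) (kvC J), V2 J n hJ,
      dotProduct_comm (XgsC J g) (kvC J), hkXgs J g hJ, ← hC]
    simp only [smul_eq_mul]
  have hQdot : nPr J n g μ ⬝ᵥ (((Wsp J n)ᵀ * gC g) *ᵥ w0 J n)
      = -(DC2 J n g μ)⁻¹ * ((C * -C) * (w0 J n ⬝ᵥ (gC g *ᵥ w0 J n))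
          + (μ * (1 - C * vC J 0) - (μ * sgsC J g) * (w0 J n ⬝ᵥ (gC g *ᵥ w0 J n)))) := by
    rw [Matrix.dotProduct_mulVec, ← Matrix.vecMul_vecMul, Matrix.vecMul_transpose, hWn]
    rw [Matrix.smul_vecMul, Matrix.add_vecMul, Matrix.smul_vecMul, Matrix.sub_vecMul,
      Matrix.smul_vecMul, Matrix.smul_vecMul]
    rw [vecMul_gC g hgs, vecMul_gC g hgs, hgg J g hg]
    rw [smul_dotProduct, add_dotProduct, smul_dotProduct,
      sub_dotProduct, smul_dotProduct, smul_dotProduct]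
    rw [V7 J n hJ, ← hC, dotProduct_comm (gC g *ᵥ w0 J n) (w0 J n)]
    simp only [smul_eq_mul]
  rw [hdd, key1v J n g μ hJ hg hgs hD, dotProduct_add, dotProduct_smul, hk,
    hQdot]
  have hb : ∑ a, ∑ b, wC J n a 0 * gC g a b * wC J n b 0
      = w0 J n ⬝ᵥ (gC g *ᵥ w0 J n) := bridge1 g (w0 J n) (w0 J n)
  rw [hb, hDC]
  simp only [smul_eq_mul]
  field_simp
  ring

lemma MC_eq_prime (hJ : IsUnit J.det) (hg : g.PosDef) (hgs : g.IsSymm)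
    (hD : DC2 J n g μ ≠ 0) :
    ADM 1 (μ / DC2 J n g μ) (nPr J n g μ) (Matrix.of fun a b => gPr J n g μ a b)
      = MC J n g μ := by
  ext i j
  induction i using Fin.cases with
  | zero =>
    induction j using Fin.cases with
    | zero =>
      simp only [ADM, MC, Matrix.of_apply, Fin.cases_zero]
      exact key2 J n g μ hJ hg hgs hD
    | succ b =>
      simp only [ADM, MC, Matrix.of_apply, Fin.cases_zero, Fin.cases_succ]
      rw [key1c J n g μ hJ hg hgs hD b]
      rw [symm_dd g hgs (fun c => wC J n c b.succ) (fun e => wC J n e 0)]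
      simp [vC, kvC]
  | succ a =>
    induction j using Fin.cases with
    | zero =>
      simp only [ADM, MC, Matrix.of_apply, Fin.cases_zero, Fin.cases_succ]
      rw [key1c J n g μ hJ hg hgs hD a]
      simp only [kvC, vC]
      ring
    | succ b =>
      simp only [ADM, MC, Matrix.of_apply, Fin.cases_succ, gPr]
      simp [vC, kvC]
      ring


lemma main_inv (hJ : IsUnit J.det) (hg : g.PosDef) (hgs : g.IsSymm)
    (hμ : μ ≠ 0) (hD : DC2 J n g μ ≠ 0) :
    ADM 1 (μ / DC2 J n g μ) (nPr J n g μ) (Matrix.of fun a b => gPr J n g μ a b)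
      * (JC J * B0C n g μ * (JC J)ᵀ) = 1 := by
  rw [MC_eq_prime J n g μ hJ hg hgs hD, ← L2a J n g μ hgs hJ]
  calc (KC J)ᵀ * A0C n g μ * KC J * (JC J * B0C n g μ * (JC J)ᵀ)
      = (KC J)ᵀ * A0C n g μ * ((KC J * JC J) * B0C n g μ) * (JC J)ᵀ := by
        noncomm_ring
    _ = (KC J)ᵀ * (A0C n g μ * B0C n g μ) * (JC J)ᵀ := by
        rw [hKJC J hJ, Matrix.one_mul]
        noncomm_ring
    _ = (KC J)ᵀ * (JC J)ᵀ := by rw [A0_mul_B0 n g μ hg hgs hμ, Matrix.mul_one]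
    _ = (JC J * KC J)ᵀ := by rw [Matrix.transpose_mul]
    _ = 1 := by rw [hJKC J hJ, Matrix.transpose_one]

lemma ADM_eps (e1 l1 e2 l2 : ℂ) (nv : Fin d → ℂ) (gm : Matrix (Fin d) (Fin d) ℂ)
    (h : e1 * l1 = e2 * l2) : ADM e1 l1 nv gm = ADM e2 l2 nv gm := by
  ext i j
  induction i using Fin.cases with
  | zero =>
    induction j using Fin.cases with
    | zero => simp [ADM, h]
    | succ b => simp [ADM]
  | succ a => rfl

lemma ADM_map (e l : ℝ) (nv : Fin d → ℝ) (gm : Matrix (Fin d) (Fin d) ℝ) :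
    (ADM e l nv gm).map Complex.ofReal
      = ADM (e : ℂ) (l : ℂ) (fun a => (nv a : ℂ)) (gm.map Complex.ofReal) := by
  ext i j
  induction i using Fin.cases with
  | zero =>
    induction j using Fin.cases with
    | zero => simp [ADM, Matrix.map_apply]
    | succ b => simp [ADM, Matrix.map_apply]
  | succ a =>
    induction j using Fin.cases with
    | zero => simp [ADM, Matrix.map_apply]
    | succ b => simp [ADM, Matrix.map_apply]

lemma sgsC_eq : sgsC J g = (sgsJ J g : ℂ) := by
  simp only [sgsC, dotProduct, Matrix.mulVec, sgsJ, Finset.mul_sum]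
  push_cast
  apply Finset.sum_congr rfl; intro c _
  apply Finset.sum_congr rfl; intro e _
  simp [sC, giC, sigJ]
  ring

lemma XgsC_eq (a : Fin d) : XgsC J g a = (Xgs J g a : ℂ) := by
  simp only [XgsC, Matrix.mulVec, dotProduct, Xgs, Finset.mul_sum]
  push_cast
  apply Finset.sum_congr rfl; intro c _
  apply Finset.sum_congr rfl; intro e _
  simp [sC, giC, XCm, XJ, sigJ]
  ring

lemma kvC_eq (a : Fin d) : kvC J a = (kJ J a : ℂ) := rfl

lemma wCs_eq (c a : Fin d) : wC J n c a.succ = ((KJ J c a : ℂ) + (kJ J a : ℂ) * (n c : ℂ)) := by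
  simp [wC, KC, KJ, kJ]
  ring

lemma gsum_cast (a b : Fin d) :
    ((∑ c, ∑ e, (KJ J c a + kJ J a * n c) * (KJ J e b + kJ J b * n e) * g c e : ℝ) : ℂ)
      = ∑ c, ∑ e, wC J n c a.succ * gC g c e * wC J n e b.succ := by
  push_cast
  apply Finset.sum_congr rfl; intro c _
  apply Finset.sum_congr rfl; intro e _
  rw [wCs_eq, wCs_eq]
  simp [gC]
  ring


lemma B0_diff (μ1 μ2 : ℂ) :
    B0C n g μ1 - B0C n g μ2 = (μ1⁻¹ - μ2⁻¹) • Matrix.vecMulVec (m0C n) (m0C n) := by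
  ext i j
  induction i using Fin.cases with
  | zero =>
    induction j using Fin.cases with
    | zero => simp [B0C, m0C, Matrix.vecMulVec_apply]
    | succ b => simp [B0C, m0C, Matrix.vecMulVec_apply, nCv]; ring
  | succ a =>
    induction j using Fin.cases with
    | zero => simp [B0C, m0C, Matrix.vecMulVec_apply, nCv]; ring
    | succ b => simp [B0C, m0C, Matrix.vecMulVec_apply, nCv]; ring

lemma sandwich_vv (x : ℂ) :
    JC J * (x • Matrix.vecMulVec (m0C n) (m0C n)) * (JC J)ᵀ
      = x • Matrix.vecMulVec (mC J n) (mC J n) := by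
  rw [Matrix.vecMulVec_eq (Fin 1), Matrix.vecMulVec_eq (Fin 1)]
  rw [Matrix.mul_smul, Matrix.smul_mul]
  congr 1
  calc JC J * (Matrix.replicateCol (Fin 1) (m0C n) * Matrix.replicateRow (Fin 1) (m0C n)) * (JC J)ᵀ
      = (JC J * Matrix.replicateCol (Fin 1) (m0C n))
          * (Matrix.replicateRow (Fin 1) (m0C n) * (JC J)ᵀ) := by
        rw [Matrix.mul_assoc, Matrix.mul_assoc, ← Matrix.mul_assoc]
    _ = Matrix.replicateCol (Fin 1) (mC J n) * Matrix.replicateRow (Fin 1) (mC J n) := by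
        rw [← Matrix.replicateCol_mulVec, ← Matrix.replicateRow_vecMul, Matrix.vecMul_transpose]
        rfl

lemma mC_cast :
    (fun i => ((J.mulVec (Fin.cases 1 fun a => -n a)) i : ℂ)) = mC J n := by
  funext i
  simp only [mC, JC, Matrix.mulVec, dotProduct, Matrix.map_apply]
  push_cast
  apply Finset.sum_congr rfl; intro k _
  congr 1
  induction k using Fin.cases with
  | zero => simp [m0C]
  | succ a => simp [m0C]

end LWR

open LWR in
theorem lapse_wick_inverse_rank_one' (d : ℕ) (hd : 1 ≤ d) (θ : ℝ) (ε : ℝ)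
    (hε : ε = -1 ∨ ε = 1)
    (N : ℝ) (hN : 0 < N) (n : Fin d → ℝ)
    (g : Matrix (Fin d) (Fin d) ℝ) (hgs : g.IsSymm) (hg : g.PosDef)
    (J : Matrix (Fin (d+1)) (Fin (d+1)) ℝ) (hJ : IsUnit J.det)
    (hDe : Deps2 J ε N n g ≠ 0) (hDθ : Dth2 J θ N n g ≠ 0) :
    IsUnit (ADM (-1 : ℂ) (lamW J θ N n g) (shiftW J θ N n g) (ghW J θ N n g)).det ∧
    IsUnit ((ADM ε (NP2 J ε N n g) (shiftP J ε N n g) (ghP J ε N n g)).map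
      Complex.ofReal).det ∧
    (ADM (-1 : ℂ) (lamW J θ N n g) (shiftW J θ N n g) (ghW J θ N n g))⁻¹
      = ((ADM ε (NP2 J ε N n g) (shiftP J ε N n g) (ghP J ε N n g)).map Complex.ofReal)⁻¹
        - (((ε : ℂ) + Complex.exp (2 * Complex.I * θ)) * ((N:ℂ)^2)⁻¹) •
            Matrix.vecMulVec
              (fun μ => ((J.mulVec (Fin.cases 1 fun a => -n a)) μ : ℂ))
              (fun μ => ((J.mulVec (Fin.cases 1 fun a => -n a)) μ : ℂ)) := by
  set μ₁ : ℂ := -(wick θ * (N:ℂ)^2) with hμ₁def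
  set μ₂ : ℂ := (ε:ℂ) * (N:ℂ)^2 with hμ₂def
  have hN2 : ((N:ℂ))^2 ≠ 0 := pow_ne_zero _ (Complex.ofReal_ne_zero.2 hN.ne')
  have hw0 : wick θ ≠ 0 := Complex.exp_ne_zero _
  have hμ1 : μ₁ ≠ 0 := by
    rw [hμ₁def]; exact neg_ne_zero.2 (mul_ne_zero hw0 hN2)
  have hεC : (ε:ℂ) ≠ 0 := by
    rcases hε with h|h <;> rw [h] <;> norm_num
  have hμ2 : μ₂ ≠ 0 := mul_ne_zero hεC hN2
  have hD1 : DC2 J n g μ₁ = Dth2 J θ N n g := by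
    rw [hμ₁def]; simp only [DC2, Dth2, sgsC_eq]; ring
  have hD2 : DC2 J n g μ₂ = ((Deps2 J ε N n g : ℝ) : ℂ) := by
    rw [hμ₂def]; simp only [DC2, Deps2, sgsC_eq]; push_cast; ring
  have hD1' : DC2 J n g μ₁ ≠ 0 := by rw [hD1]; exact hDθ
  have hD2' : DC2 J n g μ₂ ≠ 0 := by
    rw [hD2]; exact Complex.ofReal_ne_zero.2 hDe
  have eg1 : ghW J θ N n g = Matrix.of (fun a b => gPr J n g μ₁ a b) := by
    ext a b
    simp only [ghW, Matrix.of_apply, gPr, ← gsum_cast, kvC_eq]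
    rw [hμ₁def]
    ring
  have es1 : shiftW J θ N n g = nPr J n g μ₁ := by
    funext a
    simp only [shiftW, nPr]
    rw [mC_succ J n a, XgsC_eq J g a, hD1, hμ₁def]
    ring
  have e1 : ADM (-1:ℂ) (lamW J θ N n g) (shiftW J θ N n g) (ghW J θ N n g)
      = ADM 1 (μ₁ / DC2 J n g μ₁) (nPr J n g μ₁)
          (Matrix.of fun a b => gPr J n g μ₁ a b) := by
    rw [eg1, es1]
    apply ADM_eps
    rw [hD1, hμ₁def]
    simp only [lamW]
    ring
  have eg2 : (ghP J ε N n g).map Complex.ofReal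
      = Matrix.of (fun a b => gPr J n g μ₂ a b) := by
    ext a b
    simp only [Matrix.map_apply, ghP, Matrix.of_apply, gPr, ← gsum_cast, kvC_eq]
    rw [hμ₂def]
    push_cast
    ring
  have es2 : (fun a => ((shiftP J ε N n g a : ℝ) : ℂ)) = nPr J n g μ₂ := by
    funext a
    simp only [shiftP, nPr]
    rw [mC_succ J n a, XgsC_eq J g a, hD2, hμ₂def]
    push_cast
    ring
  have e2 : (ADM ε (NP2 J ε N n g) (shiftP J ε N n g) (ghP J ε N n g)).map Complex.ofReal
      = ADM 1 (μ₂ / DC2 J n g μ₂) (nPr J n g μ₂)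
          (Matrix.of fun a b => gPr J n g μ₂ a b) := by
    rw [ADM_map, eg2, es2]
    apply ADM_eps
    rw [hD2, hμ₂def]
    simp only [NP2]
    push_cast
    ring
  have h1main := main_inv J n g μ₁ hJ hg hgs hμ1 hD1'
  rw [← e1] at h1main
  have h2main := main_inv J n g μ₂ hJ hg hgs hμ2 hD2'
  rw [← e2] at h2main
  refine ⟨Matrix.isUnit_det_of_right_inverse h1main,
    Matrix.isUnit_det_of_right_inverse h2main, ?_⟩
  rw [Matrix.inv_eq_right_inv h1main, Matrix.inv_eq_right_inv h2main, mC_cast J n]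
  have hw : (wick θ)⁻¹ = Complex.exp (2*Complex.I*θ) := by
    rw [wick, ← Complex.exp_neg]
    congr 1
    ring
  have hs : μ₁⁻¹ - μ₂⁻¹
      = -(((ε:ℂ) + Complex.exp (2 * Complex.I * θ)) * ((N:ℂ)^2)⁻¹) := by
    rw [hμ₁def, hμ₂def, inv_neg, mul_inv, hw]
    rcases hε with h|h <;> rw [h] <;> push_cast <;> ring
  calc JC J * B0C n g μ₁ * (JC J)ᵀ
      = JC J * B0C n g μ₂ * (JC J)ᵀ + JC J * (B0C n g μ₁ - B0C n g μ₂) * (JC J)ᵀ := by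
        rw [Matrix.mul_sub, Matrix.sub_mul]
        noncomm_ring
    _ = _ := by
        rw [B0_diff n g μ₁ μ₂, sandwich_vv J n, hs, neg_smul, ← sub_eq_add_neg]



/-- Eqs. (2.24)-(2.25) (matrix form): rank-one perturbation formula for the inverse
lapse-Wick-rotated metric in an arbitrary foliation, with the metric-dependent vector
`m' = J·(1, -n)ᵀ`. -/
theorem lapse_wick_inverse_rank_one (d : ℕ) (hd : 1 ≤ d) (θ : ℝ) (ε : ℝ)
    (hε : ε = -1 ∨ ε = 1)
    (N : ℝ) (hN : 0 < N) (n : Fin d → ℝ)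
    (g : Matrix (Fin d) (Fin d) ℝ) (hgs : g.IsSymm) (hg : g.PosDef)
    (J : Matrix (Fin (d+1)) (Fin (d+1)) ℝ) (hJ : IsUnit J.det)
    (hDe : Deps2 J ε N n g ≠ 0) (hDθ : Dth2 J θ N n g ≠ 0) :
    IsUnit (ADM (-1 : ℂ) (lamW J θ N n g) (shiftW J θ N n g) (ghW J θ N n g)).det ∧
    IsUnit ((ADM ε (NP2 J ε N n g) (shiftP J ε N n g) (ghP J ε N n g)).map
      Complex.ofReal).det ∧
    (ADM (-1 : ℂ) (lamW J θ N n g) (shiftW J θ N n g) (ghW J θ N n g))⁻¹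
      = ((ADM ε (NP2 J ε N n g) (shiftP J ε N n g) (ghP J ε N n g)).map Complex.ofReal)⁻¹
        - (((ε : ℂ) + Complex.exp (2 * Complex.I * θ)) * ((N:ℂ)^2)⁻¹) •
            Matrix.vecMulVec
              (fun μ => ((J.mulVec (Fin.cases 1 fun a => -n a)) μ : ℂ))
              (fun μ => ((J.mulVec (Fin.cases 1 fun a => -n a)) μ : ℂ)) := by
  exact lapse_wick_inverse_rank_one' d hd θ ε hε N hN n g hgs hg J hJ hDe hDθ
end
end

section
/- Decomposition of the lapse-Wick-rotated scalar-field Lagrangian in a non-fiducial foliation (Proposition 3, Eq. (3.12), pointwise form): let θ ∈ ℝ, let (N, n, ĝ) be real ADM data, let J be a Jacobian, and assume D_θ² ≠ 0, D₊² ≠ 0 and D₋² ≠ 0, so the lapse-Wick-rotated primed triple (λ'_θ, n'_θ, ĝ'^θ), the transf₊-primed triple (N₊'², n'₊, ĝ'₊) and the transf₋-primed triple (N₋'², n'₋, ĝ'₋) are all defined. Write A'_θ := A(−1, λ'_θ, n'_θ, ĝ'^θ), A'₊ := A(+1, N₊'², n'₊, ĝ'₊), A'₋ := A(−1, N₋'²,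 n'₋, ĝ'₋); these complex matrices are invertible. Then for every real covector p ∈ ℝ^{d+1} (the gradient of the scalar field) and every U ∈ ℝ (the potential value): −e^{−iθ}·(½ pᵀ(A'_θ)⁻¹p + U) = −cos θ·(½ pᵀ(A'₋)⁻¹p + U) + i sin θ·(½ pᵀ(A'₊)⁻¹p + U). In particular, the real and imaginary parts of the lapse-Wick-rotated Lagrangian density are separately proportional to the Lorentzian and Euclidean Lagrangian densities in the new foliation. -/
open Matrix Complex BigOperators

noncomputable section

variable {d : ℕ}

section AuxLW

variable {d : ℕ}

/-- Lower-triangular block matrix `B = [[1,0],[n,I]]`. -/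
def bmatL (n : Fin d → ℂ) : Matrix (Fin (d+1)) (Fin (d+1)) ℂ :=
  Matrix.of fun i j =>
    Fin.cases (Fin.cases (1:ℂ) (fun _ => 0) j)
      (fun c => Fin.cases (n c) (fun e => if c = e then 1 else 0) j) i

/-- Upper-triangular block matrix `B' = [[1,-nᵀ],[0,I]]`. -/
def bmatR (n : Fin d → ℂ) : Matrix (Fin (d+1)) (Fin (d+1)) ℂ :=
  Matrix.of fun t j =>
    Fin.cases (Fin.cases (1:ℂ) (fun c => -n c) t)
      (fun e => Fin.cases (0:ℂ) (fun c => if c = e then 1 else 0) t) j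

lemma bmatL_mul_bmatR (n : Fin d → ℂ) : bmatL n * bmatR n = 1 := by
  ext i j
  refine Fin.cases ?_ (fun c => ?_) i <;> refine Fin.cases ?_ (fun e => ?_) j <;>
    simp [bmatL, bmatR, Matrix.mul_apply, Fin.sum_univ_succ, Matrix.one_apply,
      Finset.sum_ite_eq, Fin.succ_inj, eq_comm, Fin.succ_ne_zero]

lemma bmatR_mul_bmatL (n : Fin d → ℂ) : bmatR n * bmatL n = 1 := by
  ext i j
  refine Fin.cases ?_ (fun c => ?_) i <;> refine Fin.cases ?_ (fun e => ?_) j <;>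
    simp [bmatL, bmatR, Matrix.mul_apply, Fin.sum_univ_succ, Matrix.one_apply,
      Finset.sum_ite_eq, Fin.succ_inj, eq_comm, Fin.succ_ne_zero]

/-- `M = B · K`. -/
def Mmat (Kc : Matrix (Fin (d+1)) (Fin (d+1)) ℂ) (n : Fin d → ℂ) :
    Matrix (Fin (d+1)) (Fin (d+1)) ℂ := bmatL n * Kc

/-- `P = J · B⁻¹`. -/
def Pmat (Jc : Matrix (Fin (d+1)) (Fin (d+1)) ℂ) (n : Fin d → ℂ) :
    Matrix (Fin (d+1)) (Fin (d+1)) ℂ := Jc * bmatR n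

lemma Mmat_zero (Kc : Matrix (Fin (d+1)) (Fin (d+1)) ℂ) (n : Fin d → ℂ) (j : Fin (d+1)) :
    Mmat Kc n 0 j = Kc 0 j := by
  simp [Mmat, bmatL, Matrix.mul_apply, Fin.sum_univ_succ]

lemma Mmat_succ (Kc : Matrix (Fin (d+1)) (Fin (d+1)) ℂ) (n : Fin d → ℂ) (c : Fin d)
    (j : Fin (d+1)) : Mmat Kc n c.succ j = Kc c.succ j + n c * Kc 0 j := by
  simp [Mmat, bmatL, Matrix.mul_apply, Fin.sum_univ_succ, Finset.sum_ite_eq, add_comm]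

lemma Pmat_zero (Jc : Matrix (Fin (d+1)) (Fin (d+1)) ℂ) (n : Fin d → ℂ) (i : Fin (d+1)) :
    Pmat Jc n i 0 = Jc i 0 - ∑ c, Jc i c.succ * n c := by
  simp [Pmat, bmatR, Matrix.mul_apply, Fin.sum_univ_succ, mul_neg, sub_eq_add_neg,
    Finset.sum_neg_distrib]

lemma Pmat_succ (Jc : Matrix (Fin (d+1)) (Fin (d+1)) ℂ) (n : Fin d → ℂ) (i : Fin (d+1))
    (e : Fin d) : Pmat Jc n i e.succ = Jc i e.succ := by
  simp [Pmat, bmatR, Matrix.mul_apply, Fin.sum_univ_succ, Finset.sum_ite_eq, Fin.succ_inj,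
    Fin.succ_ne_zero]

/-- Block diagonal matrix `diag(μ, g)`. -/
def dmat (μ : ℂ) (g : Matrix (Fin d) (Fin d) ℂ) : Matrix (Fin (d+1)) (Fin (d+1)) ℂ :=
  Matrix.of fun i j =>
    Fin.cases (Fin.cases μ (fun _ => 0) j)
      (fun c => Fin.cases (0:ℂ) (fun e => g c e) j) i

lemma conj_dmat_apply (μ : ℂ) (g : Matrix (Fin d) (Fin d) ℂ)
    (M : Matrix (Fin (d+1)) (Fin (d+1)) ℂ) (i j : Fin (d+1)) :
    (Mᵀ * dmat μ g * M) i j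
      = μ * M 0 i * M 0 j + ∑ c, ∑ e, M c.succ i * g c e * M e.succ j := by
  simp only [Matrix.mul_apply, Matrix.transpose_apply, dmat, Matrix.of_apply,
    Fin.sum_univ_succ, Fin.cases_zero, Fin.cases_succ, mul_zero, zero_mul,
    Finset.sum_const_zero, add_zero, zero_add]
  congr 1
  · ring
  · simp only [Finset.sum_mul]
    rw [Finset.sum_comm]

lemma sum_pull3 {α β γ : Type*} [Fintype α] [Fintype β] [Fintype γ]
    (f : α → ℂ) (w : α → β → γ → ℂ) :
    ∑ a, f a * ∑ c, ∑ e, w a c e = ∑ c, ∑ e, ∑ a, f a * w a c e := by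
  simp only [Finset.mul_sum]
  rw [Finset.sum_comm]
  exact Finset.sum_congr rfl fun c _ => Finset.sum_comm

lemma mul_ext_succ (A B : Matrix (Fin (d+1)) (Fin (d+1)) ℂ) (i j : Fin (d+1)) :
    (A * B) i j = A i 0 * B 0 j + ∑ a : Fin d, A i a.succ * B a.succ j := by
  rw [Matrix.mul_apply, Fin.sum_univ_succ]

lemma sum_contract (k : Fin d → ℂ) (X : Fin d → Fin d → ℂ) (gi : Matrix (Fin d) (Fin d) ℂ)
    (σv : Fin d → ℂ) (v : Fin d → ℂ) (hv : ∀ c, ∑ a, k a * X a c = v c) :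
    ∑ a, k a * (∑ c, ∑ e, X a c * gi c e * σv e) = ∑ c, ∑ e, v c * gi c e * σv e := by
  rw [sum_pull3]
  refine Finset.sum_congr rfl fun c _ => Finset.sum_congr rfl fun e _ => ?_
  rw [← hv c]
  simp only [Finset.sum_mul]
  exact Finset.sum_congr rfl fun a _ => by ring

lemma g_gi_contract (g gi : Matrix (Fin d) (Fin d) ℂ)
    (hggi : ∀ c f, (∑ e, g c e * gi e f) = if c = f then 1 else 0)
    (σv : Fin d → ℂ) (c : Fin d) :
    ∑ e, g c e * ∑ f, gi e f * σv f = σv c := by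
  simp only [Finset.mul_sum]
  rw [Finset.sum_comm]
  have : ∀ f, ∑ e, g c e * (gi e f * σv f) = (if c = f then 1 else 0) * σv f := by
    intro f
    rw [← hggi c f, Finset.sum_mul]
    exact Finset.sum_congr rfl fun e _ => by ring
  rw [Finset.sum_congr rfl fun f _ => this f]
  simp [Finset.sum_ite_eq]

lemma step3_gen (g gi : Matrix (Fin d) (Fin d) ℂ)
    (hggi : ∀ c f, (∑ e, g c e * gi e f) = if c = f then 1 else 0)
    (σv v m' : Fin d → ℂ) (μ D2 : ℂ) :
    ∑ c, ∑ e, v c * g c e * (m' e - μ * (∑ f, gi e f * σv f) / D2)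
      = (∑ c, ∑ e, v c * g c e * m' e) - μ / D2 * ∑ c, v c * σv c := by
  have pt : ∀ c e, v c * g c e * (m' e - μ * (∑ f, gi e f * σv f) / D2)
      = v c * g c e * m' e - μ / D2 * (v c * (g c e * ∑ f, gi e f * σv f)) :=
    fun c e => by ring
  rw [Finset.sum_congr rfl fun c _ => Finset.sum_congr rfl fun e _ => pt c e,
    Finset.sum_congr rfl fun c (_ : c ∈ Finset.univ) => Finset.sum_sub_distrib _ _,
    Finset.sum_sub_distrib]
  congr 1
  rw [Finset.mul_sum]
  refine Finset.sum_congr rfl fun c _ => ?_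
  rw [← Finset.mul_sum, ← Finset.mul_sum, g_gi_contract g gi hggi σv c]

lemma coreLW (g gi : Matrix (Fin d) (Fin d) ℂ)
    (hgs : ∀ c e, g c e = g e c)
    (hggi : ∀ c f, (∑ e, g c e * gi e f) = if c = f then 1 else 0)
    (hgig : ∀ c f, (∑ e, gi c e * g e f) = if c = f then 1 else 0)
    (μ D2 : ℂ) (hμ : μ ≠ 0) (hD2 : D2 ≠ 0)
    (M P : Matrix (Fin (d+1)) (Fin (d+1)) ℂ) (hMP : M * P = 1) (hPM : P * M = 1)
    (hD2def : D2 = (P 0 0)^2 + μ * ∑ c, ∑ e, P 0 c.succ * gi c e * P 0 e.succ)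
    (n' : Fin d → ℂ)
    (hn' : ∀ a, n' a = -(P a.succ 0 * P 0 0
        + μ * ∑ c, ∑ e, P a.succ c.succ * gi c e * P 0 e.succ) / D2)
    (G' : Matrix (Fin d) (Fin d) ℂ)
    (hG' : ∀ a b, G' a b = (∑ c, ∑ e, M c.succ a.succ * M e.succ b.succ * g c e)
        + μ * M 0 a.succ * M 0 b.succ) :
    IsUnit (ADM 1 (μ / D2) n' G').det ∧
    ∀ p : Fin (d+1) → ℂ,
      p ⬝ᵥ (ADM 1 (μ / D2) n' G')⁻¹.mulVec p
        = (∑ i, P i 0 * p i)^2 / μ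
          + ∑ c, ∑ e, (∑ i, P i c.succ * p i) * gi c e * (∑ j, P j e.succ * p j) := by
  -- relations from M * P = 1
  have h1 : M 0 0 * P 0 0 + ∑ a : Fin d, M 0 a.succ * P a.succ 0 = 1 := by
    have := congrFun (congrFun hMP 0) 0
    rwa [mul_ext_succ, Matrix.one_apply_eq] at this
  have h2 : ∀ e : Fin d, M 0 0 * P 0 e.succ + ∑ a : Fin d, M 0 a.succ * P a.succ e.succ = 0 := by
    intro e
    have := congrFun (congrFun hMP 0) e.succ
    rwa [mul_ext_succ, Matrix.one_apply_ne (Ne.symm (Fin.succ_ne_zero e))] at this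
  have h3 : ∀ c : Fin d, M c.succ 0 * P 0 0 + ∑ a : Fin d, M c.succ a.succ * P a.succ 0 = 0 := by
    intro c
    have := congrFun (congrFun hMP c.succ) 0
    rwa [mul_ext_succ, Matrix.one_apply_ne (Fin.succ_ne_zero c)] at this
  have h4 : ∀ c e : Fin d, M c.succ 0 * P 0 e.succ
      + ∑ a : Fin d, M c.succ a.succ * P a.succ e.succ = if c = e then 1 else 0 := by
    intro c e
    have := congrFun (congrFun hMP c.succ) e.succ
    rw [mul_ext_succ, Matrix.one_apply] at this
    simpa [Fin.succ_inj] using this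
  have h5 : P 0 0 * M 0 0 + ∑ c : Fin d, P 0 c.succ * M c.succ 0 = 1 := by
    have := congrFun (congrFun hPM 0) 0
    rwa [mul_ext_succ, Matrix.one_apply_eq] at this
  have h6 : ∀ a : Fin d, P 0 0 * M 0 a.succ + ∑ c : Fin d, P 0 c.succ * M c.succ a.succ = 0 := by
    intro a
    have := congrFun (congrFun hPM 0) a.succ
    rwa [mul_ext_succ, Matrix.one_apply_ne (Ne.symm (Fin.succ_ne_zero a))] at this
  -- abbreviation: σᵀ gi σ
  have hkr : ∑ a : Fin d, M 0 a.succ * P a.succ 0 = 1 - M 0 0 * P 0 0 := by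
    linear_combination h1
  have hkXgs : ∑ a : Fin d, M 0 a.succ * (∑ c, ∑ e, P a.succ c.succ * gi c e * P 0 e.succ)
      = ∑ c, ∑ e, (-(M 0 0 * P 0 c.succ)) * gi c e * P 0 e.succ :=
    sum_contract _ _ _ _ _ (fun c => by linear_combination h2 c)
  have hpull1 : ∑ c, ∑ e, (-(M 0 0 * P 0 c.succ)) * gi c e * P 0 e.succ
      = -(M 0 0 * ∑ c, ∑ e, P 0 c.succ * gi c e * P 0 e.succ) := by
    simp only [Finset.mul_sum, neg_mul, Finset.sum_neg_distrib]
    refine congrArg Neg.neg (Finset.sum_congr rfl fun c _ => Finset.sum_congr rfl fun e _ => ?_)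
    ring
  have f1 : ∑ a : Fin d, M 0 a.succ * n' a = M 0 0 - P 0 0 / D2 := by
    have : ∑ a : Fin d, M 0 a.succ * n' a
        = (∑ a : Fin d, M 0 a.succ * -(P a.succ 0 * P 0 0
            + μ * ∑ c, ∑ e, P a.succ c.succ * gi c e * P 0 e.succ)) / D2 := by
      rw [Finset.sum_div]
      exact Finset.sum_congr rfl fun a _ => by rw [hn' a]; ring
    rw [this]
    have hnum : ∑ a : Fin d, M 0 a.succ * -(P a.succ 0 * P 0 0
        + μ * ∑ c, ∑ e, P a.succ c.succ * gi c e * P 0 e.succ)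
        = M 0 0 * D2 - P 0 0 := by
      have expand : ∀ a : Fin d, M 0 a.succ * -(P a.succ 0 * P 0 0
          + μ * ∑ c, ∑ e, P a.succ c.succ * gi c e * P 0 e.succ)
          = -(P 0 0) * (M 0 a.succ * P a.succ 0)
            + (-μ) * (M 0 a.succ * (∑ c, ∑ e, P a.succ c.succ * gi c e * P 0 e.succ)) :=
        fun a => by ring
      rw [Finset.sum_congr rfl fun a _ => expand a, Finset.sum_add_distrib,
        ← Finset.mul_sum, ← Finset.mul_sum, hkr, hkXgs, hpull1, hD2def]
      ring
    rw [hnum]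
    field_simp
  have f2 : ∀ b : Fin d, ∑ a : Fin d, M b.succ a.succ * n' a
      = M b.succ 0 - μ * (∑ f, gi b f * P 0 f.succ) / D2 := by
    intro b
    have hLr : ∑ a : Fin d, M b.succ a.succ * P a.succ 0 = -(M b.succ 0 * P 0 0) := by
      linear_combination h3 b
    have hLXgs : ∑ a : Fin d, M b.succ a.succ * (∑ c, ∑ e, P a.succ c.succ * gi c e * P 0 e.succ)
        = ∑ c, ∑ e, ((if b = c then 1 else 0) - M b.succ 0 * P 0 c.succ) * gi c e * P 0 e.succ :=
      sum_contract _ _ _ _ _ (fun c => by linear_combination h4 b c)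
    have hsplit : ∑ c, ∑ e, ((if b = c then 1 else 0) - M b.succ 0 * P 0 c.succ) * gi c e * P 0 e.succ
        = (∑ f, gi b f * P 0 f.succ)
          - M b.succ 0 * ∑ c, ∑ e, P 0 c.succ * gi c e * P 0 e.succ := by
      have expand : ∀ c, ∑ e, ((if b = c then 1 else 0) - M b.succ 0 * P 0 c.succ) * gi c e * P 0 e.succ
          = (if b = c then (∑ f, gi c f * P 0 f.succ) else 0)
            - M b.succ 0 * ∑ e, P 0 c.succ * gi c e * P 0 e.succ := by
        intro c
        by_cases h : b = c
        · subst h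
          simp only [eq_self_iff_true, if_true, Finset.mul_sum]
          rw [← Finset.sum_sub_distrib]
          exact Finset.sum_congr rfl fun e _ => by ring
        · simp only [if_neg h, Finset.mul_sum, zero_sub, ← Finset.sum_neg_distrib]
          exact Finset.sum_congr rfl fun e _ => by ring
      rw [Finset.sum_congr rfl fun c _ => expand c, Finset.sum_sub_distrib, ← Finset.mul_sum,
        Finset.sum_ite_eq]
      simp
    have : ∑ a : Fin d, M b.succ a.succ * n' a
        = (∑ a : Fin d, M b.succ a.succ * -(P a.succ 0 * P 0 0
            + μ * ∑ c, ∑ e, P a.succ c.succ * gi c e * P 0 e.succ)) / D2 := by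
      rw [Finset.sum_div]
      exact Finset.sum_congr rfl fun a _ => by rw [hn' a]; ring
    rw [this]
    have hnum : ∑ a : Fin d, M b.succ a.succ * -(P a.succ 0 * P 0 0
        + μ * ∑ c, ∑ e, P a.succ c.succ * gi c e * P 0 e.succ)
        = M b.succ 0 * D2 - μ * (∑ f, gi b f * P 0 f.succ) := by
      have expand : ∀ a : Fin d, M b.succ a.succ * -(P a.succ 0 * P 0 0
          + μ * ∑ c, ∑ e, P a.succ c.succ * gi c e * P 0 e.succ)
          = -(P 0 0) * (M b.succ a.succ * P a.succ 0)
            + (-μ) * (M b.succ a.succ * (∑ c, ∑ e, P a.succ c.succ * gi c e * P 0 e.succ)) :=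
        fun a => by ring
      rw [Finset.sum_congr rfl fun a _ => expand a, Finset.sum_add_distrib,
        ← Finset.mul_sum, ← Finset.mul_sum, hLr, hLXgs, hsplit, hD2def]
      ring
    rw [hnum]
    field_simp
  have f3 : ∀ b : Fin d, ∑ a : Fin d, G' b a * n' a
      = μ * M 0 0 * M 0 b.succ + ∑ c, ∑ e, M c.succ 0 * g c e * M e.succ b.succ := by
    intro b
    have pt : ∀ a : Fin d, G' b a * n' a
        = n' a * (∑ c, ∑ e, M c.succ b.succ * M e.succ a.succ * g c e)
          + (μ * M 0 b.succ) * (M 0 a.succ * n' a) := fun a => by rw [hG' b a]; ring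
    rw [Finset.sum_congr rfl fun a _ => pt a, Finset.sum_add_distrib, ← Finset.mul_sum,
      sum_pull3 n' _, f1]
    have step2 : ∀ c e : Fin d, ∑ a : Fin d, n' a * (M c.succ b.succ * M e.succ a.succ * g c e)
        = M c.succ b.succ * g c e * (M e.succ 0 - μ * (∑ f, gi e f * P 0 f.succ) / D2) := by
      intro c e
      rw [← f2 e, Finset.mul_sum]
      exact Finset.sum_congr rfl fun a _ => by ring
    rw [Finset.sum_congr rfl fun c _ => Finset.sum_congr rfl fun e _ => step2 c e,
      step3_gen g gi hggi _ _ _ μ D2]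
    have step4 : ∑ c : Fin d, M c.succ b.succ * P 0 c.succ = -(P 0 0 * M 0 b.succ) := by
      have comm : ∑ c : Fin d, M c.succ b.succ * P 0 c.succ
          = ∑ c : Fin d, P 0 c.succ * M c.succ b.succ :=
        Finset.sum_congr rfl fun c _ => mul_comm _ _
      rw [comm]
      linear_combination h6 b
    rw [step4]
    have swap : ∑ c, ∑ e, M c.succ b.succ * g c e * M e.succ 0
        = ∑ c, ∑ e, M c.succ 0 * g c e * M e.succ b.succ := by
      rw [Finset.sum_comm]
      refine Finset.sum_congr rfl fun c _ => Finset.sum_congr rfl fun e _ => ?_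
      rw [hgs e c]
      ring
    rw [swap]
    field_simp
    ring
  have f4 : ∑ a : Fin d, ∑ b : Fin d, G' a b * n' a * n' b
      = μ * M 0 0 ^ 2 + (∑ c, ∑ e, M c.succ 0 * g c e * M e.succ 0) - μ / D2 := by
    have pt : ∀ a : Fin d, ∑ b : Fin d, G' a b * n' a * n' b
        = (μ * M 0 0) * (M 0 a.succ * n' a)
          + n' a * (∑ c, ∑ e, M c.succ 0 * g c e * M e.succ a.succ) := by
      intro a
      have : ∑ b : Fin d, G' a b * n' a * n' b = n' a * ∑ b : Fin d, G' a b * n' b := by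
        rw [Finset.mul_sum]
        exact Finset.sum_congr rfl fun b _ => by ring
      rw [this, f3 a]
      ring
    rw [Finset.sum_congr rfl fun a _ => pt a, Finset.sum_add_distrib, ← Finset.mul_sum, f1,
      sum_pull3 n' _]
    have step2 : ∀ c e : Fin d, ∑ a : Fin d, n' a * (M c.succ 0 * g c e * M e.succ a.succ)
        = M c.succ 0 * g c e * (M e.succ 0 - μ * (∑ f, gi e f * P 0 f.succ) / D2) := by
      intro c e
      rw [← f2 e, Finset.mul_sum]
      exact Finset.sum_congr rfl fun a _ => by ring
    rw [Finset.sum_congr rfl fun c _ => Finset.sum_congr rfl fun e _ => step2 c e,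
      step3_gen g gi hggi _ _ _ μ D2]
    have step4 : ∑ c : Fin d, M c.succ 0 * P 0 c.succ = 1 - P 0 0 * M 0 0 := by
      have comm : ∑ c : Fin d, M c.succ 0 * P 0 c.succ
          = ∑ c : Fin d, P 0 c.succ * M c.succ 0 :=
        Finset.sum_congr rfl fun c _ => mul_comm _ _
      rw [comm]
      linear_combination h5
    rw [step4]
    field_simp
    ring
  have hA : ADM 1 (μ / D2) n' G' = Mᵀ * dmat μ g * M := by
    ext i j
    rw [conj_dmat_apply]
    refine Fin.cases ?_ (fun a => ?_) i <;> refine Fin.cases ?_ (fun b => ?_) j <;>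
      simp only [ADM, Matrix.of_apply, Fin.cases_zero, Fin.cases_succ]
    · rw [one_mul, f4]
      ring
    · exact f3 b
    · rw [f3 a]
      have swap : ∑ c, ∑ e, M c.succ 0 * g c e * M e.succ a.succ
          = ∑ c, ∑ e, M c.succ a.succ * g c e * M e.succ 0 := by
        rw [Finset.sum_comm]
        refine Finset.sum_congr rfl fun c _ => Finset.sum_congr rfl fun e _ => ?_
        rw [hgs e c]
        ring
      rw [swap]
      ring
    · rw [hG' a b]
      rw [Finset.sum_congr rfl fun c _ => Finset.sum_congr rfl fun e _ =>
        (show M c.succ a.succ * M e.succ b.succ * g c e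
            = M c.succ a.succ * g c e * M e.succ b.succ from by ring)]
      ring
  have hdd : dmat μ g * dmat μ⁻¹ gi = 1 := by
    ext i j
    refine Fin.cases ?_ (fun c => ?_) i <;> refine Fin.cases ?_ (fun e => ?_) j <;>
      simp [dmat, Matrix.mul_apply, Fin.sum_univ_succ, Matrix.one_apply, Fin.succ_ne_zero,
        (Fin.succ_ne_zero _).symm, mul_inv_cancel₀ hμ, hggi, Fin.succ_inj]
  have hAQ : ADM 1 (μ / D2) n' G' * (P * dmat μ⁻¹ gi * Pᵀ) = 1 := by
    rw [hA]
    calc Mᵀ * dmat μ g * M * (P * dmat μ⁻¹ gi * Pᵀ)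
        = Mᵀ * ((dmat μ g * ((M * P) * dmat μ⁻¹ gi)) * Pᵀ) := by
          simp only [Matrix.mul_assoc]
      _ = 1 := by
          rw [hMP, Matrix.one_mul, hdd, Matrix.one_mul, ← Matrix.transpose_mul, hPM,
            Matrix.transpose_one]
  refine ⟨IsUnit.of_mul_eq_one (P * dmat μ⁻¹ gi * Pᵀ).det
    (by rw [← Matrix.det_mul, hAQ, Matrix.det_one]), fun p => ?_⟩
  rw [Matrix.inv_eq_right_inv hAQ]
  have hQap : ∀ i j, (P * dmat μ⁻¹ gi * Pᵀ) i j
      = μ⁻¹ * P i 0 * P j 0 + ∑ c, ∑ e, P i c.succ * gi c e * P j e.succ := by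
    intro i j
    have := conj_dmat_apply μ⁻¹ gi Pᵀ i j
    rw [Matrix.transpose_transpose] at this
    simpa [Matrix.transpose_apply] using this
  have inner : ∀ i, ∑ j, (P * dmat μ⁻¹ gi * Pᵀ) i j * p j
      = μ⁻¹ * P i 0 * (∑ j, P j 0 * p j)
        + ∑ c, ∑ e, P i c.succ * gi c e * (∑ j, P j e.succ * p j) := by
    intro i
    rw [Finset.sum_congr rfl fun j (_ : j ∈ Finset.univ) => (by rw [hQap i j]; ring :
      (P * dmat μ⁻¹ gi * Pᵀ) i j * p j
        = (μ⁻¹ * P i 0) * (P j 0 * p j)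
          + p j * (∑ c, ∑ e, P i c.succ * gi c e * P j e.succ)),
      Finset.sum_add_distrib, ← Finset.mul_sum, sum_pull3 p _]
    rw [Finset.sum_congr rfl fun c (_ : c ∈ Finset.univ) =>
      Finset.sum_congr rfl fun e (_ : e ∈ Finset.univ) =>
      (show ∑ j, p j * (P i c.succ * gi c e * P j e.succ)
          = P i c.succ * gi c e * (∑ j, P j e.succ * p j) from by
        rw [Finset.mul_sum]
        exact Finset.sum_congr rfl fun j _ => by ring)]
  calc p ⬝ᵥ (P * dmat μ⁻¹ gi * Pᵀ).mulVec p
      = ∑ i, p i * (μ⁻¹ * P i 0 * (∑ j, P j 0 * p j)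
          + ∑ c, ∑ e, P i c.succ * gi c e * (∑ j, P j e.succ * p j)) := by
        simp only [dotProduct, Matrix.mulVec]
        exact Finset.sum_congr rfl fun i _ => by rw [← inner i]
    _ = (∑ i, P i 0 * p i)^2 / μ
          + ∑ c, ∑ e, (∑ i, P i c.succ * p i) * gi c e * (∑ j, P j e.succ * p j) := by
        rw [Finset.sum_congr rfl fun i (_ : i ∈ Finset.univ) => (by ring :
          p i * (μ⁻¹ * P i 0 * (∑ j, P j 0 * p j)
            + ∑ c, ∑ e, P i c.succ * gi c e * (∑ j, P j e.succ * p j))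
          = (μ⁻¹ * (∑ j, P j 0 * p j)) * (P i 0 * p i)
            + p i * (∑ c, ∑ e, P i c.succ * gi c e * (∑ j, P j e.succ * p j))),
          Finset.sum_add_distrib, ← Finset.mul_sum, sum_pull3 p _]
        rw [Finset.sum_congr rfl fun c (_ : c ∈ Finset.univ) =>
          Finset.sum_congr rfl fun e (_ : e ∈ Finset.univ) =>
          (show ∑ i, p i * (P i c.succ * gi c e * (∑ j, P j e.succ * p j))
              = (∑ i, P i c.succ * p i) * gi c e * (∑ j, P j e.succ * p j) from by
            rw [Finset.sum_mul, Finset.sum_mul]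
            exact Finset.sum_congr rfl fun i _ => by ring)]
        field_simp

lemma map_mul_ofReal {m : ℕ} (A B : Matrix (Fin m) (Fin m) ℝ) :
    (A * B).map Complex.ofReal = A.map Complex.ofReal * B.map Complex.ofReal := by
  ext i j
  simp [Matrix.mul_apply, Matrix.map_apply]

lemma map_one_ofReal {m : ℕ} :
    (1 : Matrix (Fin m) (Fin m) ℝ).map Complex.ofReal = 1 := by
  ext i j
  simp [Matrix.map_apply, Matrix.one_apply]
  split <;> simp

lemma instLW (d : ℕ) (n : Fin d → ℝ) (g : Matrix (Fin d) (Fin d) ℝ)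
    (hgs : g.IsSymm) (hg : g.PosDef)
    (J : Matrix (Fin (d+1)) (Fin (d+1)) ℝ) (hJ : IsUnit J.det)
    (μ D2 : ℂ) (hμ : μ ≠ 0) (hD2 : D2 ≠ 0)
    (hD2v : D2 = ((CJ J n : ℝ) : ℂ)^2 + μ * ((sgsJ J g : ℝ) : ℂ))
    (n' : Fin d → ℂ)
    (hn'v : ∀ a, n' a = -(((rXn J n a : ℝ):ℂ) * ((CJ J n : ℝ):ℂ)
        + μ * ((Xgs J g a : ℝ):ℂ)) / D2)
    (G' : Matrix (Fin d) (Fin d) ℂ)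
    (hG'v : ∀ a b, G' a b
        = ((∑ c, ∑ e, (KJ J c a + kJ J a * n c) * (KJ J e b + kJ J b * n e) * g c e : ℝ) : ℂ)
          + μ * ((kJ J a : ℝ):ℂ) * ((kJ J b : ℝ):ℂ)) :
    IsUnit (ADM 1 (μ / D2) n' G').det ∧
    ∀ p : Fin (d+1) → ℂ,
      p ⬝ᵥ (ADM 1 (μ / D2) n' G')⁻¹.mulVec p
        = (((CJ J n : ℝ):ℂ) * p 0 + ∑ a, ((rXn J n a : ℝ):ℂ) * p a.succ)^2 / μ
          + ∑ c, ∑ e,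
              (((sigJ J c : ℝ):ℂ) * p 0 + ∑ a, ((XJ J a c : ℝ):ℂ) * p a.succ)
              * ((g⁻¹ c e : ℝ):ℂ)
              * (((sigJ J e : ℝ):ℂ) * p 0 + ∑ a, ((XJ J a e : ℝ):ℂ) * p a.succ) := by
  set Jc := J.map Complex.ofReal with hJcdef
  set Kc := J⁻¹.map Complex.ofReal with hKcdef
  set gc := g.map Complex.ofReal with hgcdef
  set gic := g⁻¹.map Complex.ofReal with hgicdef
  set nc : Fin d → ℂ := fun a => ((n a : ℝ) : ℂ) with hncdef
  have hgd : IsUnit g.det := isUnit_iff_ne_zero.mpr hg.det_pos.ne'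
  have hJcKc : Jc * Kc = 1 := by
    rw [hJcdef, hKcdef, ← map_mul_ofReal, Matrix.mul_nonsing_inv J hJ, map_one_ofReal]
  have hKcJc : Kc * Jc = 1 := by
    rw [hJcdef, hKcdef, ← map_mul_ofReal, Matrix.nonsing_inv_mul J hJ, map_one_ofReal]
  have hgcgic : gc * gic = 1 := by
    rw [hgcdef, hgicdef, ← map_mul_ofReal, Matrix.mul_nonsing_inv g hgd, map_one_ofReal]
  have hgicgc : gic * gc = 1 := by
    rw [hgcdef, hgicdef, ← map_mul_ofReal, Matrix.nonsing_inv_mul g hgd, map_one_ofReal]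
  have hggi : ∀ c f, (∑ e, gc c e * gic e f) = if c = f then (1:ℂ) else 0 := by
    intro c f
    have := congrFun (congrFun hgcgic c) f
    rwa [Matrix.mul_apply, Matrix.one_apply] at this
  have hgig : ∀ c f, (∑ e, gic c e * gc e f) = if c = f then (1:ℂ) else 0 := by
    intro c f
    have := congrFun (congrFun hgicgc c) f
    rwa [Matrix.mul_apply, Matrix.one_apply] at this
  have hgsc : ∀ c e, gc c e = gc e c := by
    intro c e
    have := congrFun (congrFun hgs.eq c) e
    simp only [Matrix.transpose_apply] at this
    simp [hgcdef, Matrix.map_apply, this]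
  have hMP : Mmat Kc nc * Pmat Jc nc = 1 := by
    rw [Mmat, Pmat]
    calc bmatL nc * Kc * (Jc * bmatR nc)
        = bmatL nc * ((Kc * Jc) * bmatR nc) := by simp only [Matrix.mul_assoc]
      _ = 1 := by rw [hKcJc, Matrix.one_mul, bmatL_mul_bmatR]
  have hPM : Pmat Jc nc * Mmat Kc nc = 1 := by
    rw [Mmat, Pmat]
    calc Jc * bmatR nc * (bmatL nc * Kc)
        = Jc * ((bmatR nc * bmatL nc) * Kc) := by simp only [Matrix.mul_assoc]
      _ = 1 := by rw [bmatR_mul_bmatL, Matrix.one_mul, hJcKc]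
  -- entry conversions
  have eP00 : Pmat Jc nc 0 0 = ((CJ J n : ℝ):ℂ) := by
    rw [Pmat_zero]
    simp only [CJ, tauJ, sigJ]
    push_cast
    simp [hJcdef, Matrix.map_apply, hncdef]
  have ePs0 : ∀ a : Fin d, Pmat Jc nc a.succ 0 = ((rXn J n a : ℝ):ℂ) := by
    intro a
    rw [Pmat_zero]
    simp only [rXn, rhoJ, XJ, Matrix.of_apply]
    push_cast
    simp [hJcdef, Matrix.map_apply, hncdef]
  have eP0c : ∀ c : Fin d, Pmat Jc nc 0 c.succ = ((sigJ J c : ℝ):ℂ) := by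
    intro c
    rw [Pmat_succ]
    simp [sigJ, hJcdef, Matrix.map_apply]
  have ePac : ∀ (a c : Fin d), Pmat Jc nc a.succ c.succ = ((XJ J a c : ℝ):ℂ) := by
    intro a c
    rw [Pmat_succ]
    simp [XJ, hJcdef, Matrix.map_apply]
  have eM0a : ∀ a : Fin d, Mmat Kc nc 0 a.succ = ((kJ J a : ℝ):ℂ) := by
    intro a
    rw [Mmat_zero]
    simp [kJ, hKcdef, Matrix.map_apply]
  have eMca : ∀ (c a : Fin d), Mmat Kc nc c.succ a.succ
      = ((KJ J c a : ℝ):ℂ) + ((n c : ℝ):ℂ) * ((kJ J a : ℝ):ℂ) := by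
    intro c a
    rw [Mmat_succ]
    simp [KJ, kJ, hKcdef, Matrix.map_apply, hncdef]
  have esgs : ∑ c, ∑ e, Pmat Jc nc 0 c.succ * gic c e * Pmat Jc nc 0 e.succ
      = ((sgsJ J g : ℝ):ℂ) := by
    simp only [sgsJ]
    push_cast
    refine Finset.sum_congr rfl fun c _ => Finset.sum_congr rfl fun e _ => ?_
    rw [eP0c c, eP0c e]
    simp [hgicdef, Matrix.map_apply]
  have eXgs : ∀ a : Fin d, ∑ c, ∑ e, Pmat Jc nc a.succ c.succ * gic c e * Pmat Jc nc 0 e.succ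
      = ((Xgs J g a : ℝ):ℂ) := by
    intro a
    simp only [Xgs]
    push_cast
    refine Finset.sum_congr rfl fun c _ => Finset.sum_congr rfl fun e _ => ?_
    rw [ePac a c, eP0c e]
    simp [hgicdef, Matrix.map_apply]
  have main := coreLW gc gic hgsc hggi hgig μ D2 hμ hD2 (Mmat Kc nc) (Pmat Jc nc) hMP hPM
    (by rw [hD2v, eP00, esgs])
    n'
    (by
      intro a
      rw [hn'v a, ePs0 a, eP00, eXgs a])
    G'
    (by
      intro a b
      rw [hG'v a b, eM0a a, eM0a b]
      push_cast
      congr 1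
      refine Finset.sum_congr rfl fun c _ => Finset.sum_congr rfl fun e _ => ?_
      rw [eMca c a, eMca e b]
      simp only [hgcdef, Matrix.map_apply]
      ring)
  refine ⟨main.1, fun p => ?_⟩
  have c1 : ∑ i, Pmat Jc nc i 0 * p i
      = ((CJ J n : ℝ):ℂ) * p 0 + ∑ a, ((rXn J n a : ℝ):ℂ) * p a.succ := by
    rw [Fin.sum_univ_succ, eP00]
    congr 1
    exact Finset.sum_congr rfl fun a _ => by rw [ePs0 a]
  have c2 : ∀ c : Fin d, ∑ i, Pmat Jc nc i c.succ * p i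
      = ((sigJ J c : ℝ):ℂ) * p 0 + ∑ a, ((XJ J a c : ℝ):ℂ) * p a.succ := by
    intro c
    rw [Fin.sum_univ_succ, eP0c c]
    congr 1
    exact Finset.sum_congr rfl fun a _ => by rw [ePac a c]
  rw [main.2 p, c1]
  congr 1
  refine Finset.sum_congr rfl fun c _ => Finset.sum_congr rfl fun e _ => ?_
  rw [c2 c, c2 e]
  simp only [hgicdef, Matrix.map_apply]

lemma ADM_eps1 {d : ℕ} (ε lam lam' : ℂ) (n : Fin d → ℂ) (g : Matrix (Fin d) (Fin d) ℂ)
    (h : ε * lam = lam') : ADM ε lam n g = ADM 1 lam' n g := by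
  ext i j
  refine Fin.cases ?_ (fun a => ?_) i <;> refine Fin.cases ?_ (fun b => ?_) j <;>
    simp only [ADM, Matrix.of_apply, Fin.cases_zero, Fin.cases_succ]
  rw [← h]
  ring

lemma ADM_map {d : ℕ} (ε lam : ℝ) (n : Fin d → ℝ) (g : Matrix (Fin d) (Fin d) ℝ) :
    (ADM ε lam n g).map Complex.ofReal
      = ADM ((ε:ℝ):ℂ) ((lam:ℝ):ℂ) (fun a => ((n a : ℝ):ℂ)) (g.map Complex.ofReal) := by
  ext i j
  refine Fin.cases ?_ (fun a => ?_) i <;> refine Fin.cases ?_ (fun b => ?_) j <;>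
    simp only [ADM, Matrix.map_apply, Matrix.of_apply, Fin.cases_zero, Fin.cases_succ] <;>
    push_cast <;> rfl

lemma final_scalar (θ : ℝ) (N : ℝ) (hN : 0 < N) (W S U : ℂ) :
    -Complex.exp (-Complex.I * θ) * (1/2 * (W / -(wick θ * (N:ℂ)^2) + S) + U)
      = -(Real.cos θ:ℂ) * (1/2 * (W / -((N:ℂ)^2) + S) + U)
        + Complex.I * (Real.sin θ:ℂ) * (1/2 * (W / ((N:ℂ)^2) + S) + U) := by
  have hNne : (N:ℂ) ≠ 0 := Complex.ofReal_ne_zero.mpr hN.ne'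
  have hx : Complex.exp (-Complex.I * θ) ≠ 0 := Complex.exp_ne_zero _
  have hE : Complex.exp (-Complex.I * θ) = Complex.cos θ - Complex.sin θ * Complex.I := by
    rw [show -Complex.I * (θ:ℂ) = (-(θ:ℂ)) * Complex.I by ring, Complex.exp_mul_I,
      Complex.cos_neg, Complex.sin_neg]
    ring
  have hW2 : wick θ = Complex.exp (-Complex.I * θ) ^ 2 := by
    rw [wick, show (-2*Complex.I*(θ:ℂ)) = -Complex.I*θ + -Complex.I*θ by ring,
      Complex.exp_add]
    ring
  have hcs : (Complex.cos θ)^2 + (Complex.sin θ)^2 = 1 := by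
    rw [add_comm]
    exact Complex.sin_sq_add_cos_sq _
  have hprod : (Complex.cos θ - Complex.sin θ * Complex.I)
      * (Complex.cos θ + Complex.sin θ * Complex.I) = 1 := by
    linear_combination hcs - (Complex.sin θ)^2 * Complex.I_sq
  have hinv : (Complex.exp (-Complex.I * θ))⁻¹
      = Complex.cos θ + Complex.sin θ * Complex.I :=
    inv_eq_of_mul_eq_one_right (by rw [hE]; exact hprod)
  have key : W / -(Complex.exp (-Complex.I*θ)^2 * (N:ℂ)^2)
      = -((Complex.cos θ + Complex.sin θ * Complex.I)^2 * W / (N:ℂ)^2) := by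
    rw [← hinv]
    field_simp [hx]
  rw [hW2, key, hE, Complex.ofReal_cos, Complex.ofReal_sin]
  linear_combination (W * (Complex.cos θ + Complex.sin θ * Complex.I) / (2*(N:ℂ)^2)) * hprod

end AuxLW
/-- Proposition 3, Eq. (3.12) (pointwise form): decomposition of the lapse-Wick-rotated
scalar-field Lagrangian in a non-fiducial foliation into Lorentzian and Euclidean parts. -/
theorem lapse_wick_lagrangian_decomposition (d : ℕ) (hd : 1 ≤ d) (θ : ℝ)
    (N : ℝ) (hN : 0 < N) (n : Fin d → ℝ)
    (g : Matrix (Fin d) (Fin d) ℝ) (hgs : g.IsSymm) (hg : g.PosDef)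
    (J : Matrix (Fin (d+1)) (Fin (d+1)) ℝ) (hJ : IsUnit J.det)
    (hDθ : Dth2 J θ N n g ≠ 0)
    (hDp : Deps2 J 1 N n g ≠ 0) (hDm : Deps2 J (-1) N n g ≠ 0) :
    IsUnit (ADM (-1 : ℂ) (lamW J θ N n g) (shiftW J θ N n g) (ghW J θ N n g)).det ∧
    IsUnit ((ADM (1:ℝ) (NP2 J 1 N n g) (shiftP J 1 N n g) (ghP J 1 N n g)).map
      Complex.ofReal).det ∧
    IsUnit ((ADM (-1:ℝ) (NP2 J (-1) N n g) (shiftP J (-1) N n g) (ghP J (-1) N n g)).map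
      Complex.ofReal).det ∧
    ∀ (p : Fin (d+1) → ℝ) (U : ℝ),
      -Complex.exp (-Complex.I * θ) *
          ((1/2 : ℂ) * ((fun μ => (p μ : ℂ)) ⬝ᵥ
            (ADM (-1 : ℂ) (lamW J θ N n g) (shiftW J θ N n g) (ghW J θ N n g))⁻¹.mulVec
              (fun μ => (p μ : ℂ))) + (U : ℂ))
        = -(Real.cos θ : ℂ) *
            ((1/2 : ℂ) * ((fun μ => (p μ : ℂ)) ⬝ᵥ
              ((ADM (-1:ℝ) (NP2 J (-1) N n g) (shiftP J (-1) N n g)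
                (ghP J (-1) N n g)).map Complex.ofReal)⁻¹.mulVec
                  (fun μ => (p μ : ℂ))) + (U : ℂ))
          + Complex.I * (Real.sin θ : ℂ) *
            ((1/2 : ℂ) * ((fun μ => (p μ : ℂ)) ⬝ᵥ
              ((ADM (1:ℝ) (NP2 J 1 N n g) (shiftP J 1 N n g)
                (ghP J 1 N n g)).map Complex.ofReal)⁻¹.mulVec
                  (fun μ => (p μ : ℂ))) + (U : ℂ)) := by
  have hNne : (N:ℂ) ≠ 0 := Complex.ofReal_ne_zero.mpr hN.ne'
  have hμp : ((N:ℂ)^2) ≠ 0 := pow_ne_zero _ hNne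
  have hμθ : -(wick θ * (N:ℂ)^2) ≠ 0 :=
    neg_ne_zero.mpr (mul_ne_zero (Complex.exp_ne_zero _) hμp)
  have hμm : -((N:ℂ)^2) ≠ 0 := neg_ne_zero.mpr hμp
  have hD2p : ((Deps2 J 1 N n g : ℝ):ℂ) ≠ 0 := Complex.ofReal_ne_zero.mpr hDp
  have hD2m : ((Deps2 J (-1) N n g : ℝ):ℂ) ≠ 0 := Complex.ofReal_ne_zero.mpr hDm
  have instθ := instLW d n g hgs hg J hJ (-(wick θ * (N:ℂ)^2)) (Dth2 J θ N n g) hμθ hDθ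
    (by rw [Dth2]; ring)
    (shiftW J θ N n g) (fun a => by simp only [shiftW]; ring)
    (ghW J θ N n g) (fun a b => by simp only [ghW, Matrix.of_apply]; ring)
  have instp := instLW d n g hgs hg J hJ ((N:ℂ)^2) ((Deps2 J 1 N n g : ℝ):ℂ) hμp hD2p
    (by simp only [Deps2]; push_cast; ring)
    (fun a => ((shiftP J 1 N n g a : ℝ):ℂ))
    (fun a => by simp only [shiftP]; push_cast; ring)
    ((ghP J 1 N n g).map Complex.ofReal)
    (fun a b => by simp only [ghP, Matrix.map_apply, Matrix.of_apply]; push_cast; ring)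
  have instm := instLW d n g hgs hg J hJ (-((N:ℂ)^2)) ((Deps2 J (-1) N n g : ℝ):ℂ) hμm hD2m
    (by simp only [Deps2]; push_cast; ring)
    (fun a => ((shiftP J (-1) N n g a : ℝ):ℂ))
    (fun a => by simp only [shiftP]; push_cast; ring)
    ((ghP J (-1) N n g).map Complex.ofReal)
    (fun a b => by simp only [ghP, Matrix.map_apply, Matrix.of_apply]; push_cast; ring)
  have eθ : ADM (-1 : ℂ) (lamW J θ N n g) (shiftW J θ N n g) (ghW J θ N n g)
      = ADM 1 (-(wick θ * (N:ℂ)^2) / Dth2 J θ N n g) (shiftW J θ N n g) (ghW J θ N n g) :=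
    ADM_eps1 _ _ _ _ _ (by rw [lamW]; ring)
  have ep : (ADM (1:ℝ) (NP2 J 1 N n g) (shiftP J 1 N n g) (ghP J 1 N n g)).map Complex.ofReal
      = ADM 1 ((N:ℂ)^2 / ((Deps2 J 1 N n g : ℝ):ℂ))
          (fun a => ((shiftP J 1 N n g a : ℝ):ℂ)) ((ghP J 1 N n g).map Complex.ofReal) := by
    rw [ADM_map]
    exact ADM_eps1 _ _ _ _ _ (by simp only [NP2]; push_cast; ring)
  have em : (ADM (-1:ℝ) (NP2 J (-1) N n g) (shiftP J (-1) N n g)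
        (ghP J (-1) N n g)).map Complex.ofReal
      = ADM 1 (-((N:ℂ)^2) / ((Deps2 J (-1) N n g : ℝ):ℂ))
          (fun a => ((shiftP J (-1) N n g a : ℝ):ℂ))
          ((ghP J (-1) N n g).map Complex.ofReal) := by
    rw [ADM_map]
    exact ADM_eps1 _ _ _ _ _ (by simp only [NP2]; push_cast; ring)
  refine ⟨by rw [eθ]; exact instθ.1, by rw [ep]; exact instp.1, by rw [em]; exact instm.1,
    fun p U => ?_⟩
  rw [eθ, ep, em, instθ.2 (fun μ => ((p μ : ℝ):ℂ)), instp.2 (fun μ => ((p μ : ℝ):ℂ)),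
    instm.2 (fun μ => ((p μ : ℝ):ℂ))]
  exact final_scalar θ N hN _ _ _
end
end

section
/- Wedge lemma for the numerical values of the lapse-Wick-rotated Hessian (supporting Proposition 4(b)): let θ ∈ (0, π) and set θ̃ := min(θ, π − θ). Let a, b ∈ ℝ with |b| ≤ a, and let z := −a·sin θ − i·b·cos θ ∈ ℂ. If z ≠ 0, then |arg z| ≥ π/2 + θ̃, where arg denotes the principal argument valued in (−π, π]. Equivalently, z lies in the closed wedge of the left half plane at angular distance at least θ̃ from the imaginary axis. -/
open Complex

/-- Wedge lemma for the numerical values of the lapse-Wick-rotated Hessian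
(supporting Proposition 4(b)): if `|b| ≤ a` and `z = -a sin θ - i b cos θ ≠ 0`
with `θ ∈ (0, π)`, then `|arg z| ≥ π/2 + min(θ, π-θ)`. -/
theorem wedge_lemma (θ : ℝ) (hθ : θ ∈ Set.Ioo 0 Real.pi) (a b : ℝ) (hab : |b| ≤ a)
    (hz : ((-(a * Real.sin θ) : ℝ) : ℂ) - Complex.I * ((b * Real.cos θ : ℝ) : ℂ) ≠ 0) :
    Real.pi / 2 + min θ (Real.pi - θ)
      ≤ |(((-(a * Real.sin θ) : ℝ) : ℂ) - Complex.I * ((b * Real.cos θ : ℝ) : ℂ)).arg| := by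
  obtain ⟨hθ0, hθπ⟩ := hθ
  set z : ℂ := ((-(a * Real.sin θ) : ℝ) : ℂ) - Complex.I * ((b * Real.cos θ : ℝ) : ℂ) with hzdef
  have hre : z.re = -(a * Real.sin θ) := by
    simp [hzdef, Complex.sub_re, Complex.mul_re, -Complex.ofReal_sin, -Complex.ofReal_cos]
  have him : z.im = -(b * Real.cos θ) := by
    simp [hzdef, Complex.sub_im, Complex.mul_im, -Complex.ofReal_sin, -Complex.ofReal_cos]
  have hsin : 0 < Real.sin θ := Real.sin_pos_of_pos_of_lt_pi hθ0 hθπ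
  have ha0 : 0 ≤ a := le_trans (abs_nonneg b) hab
  have ha : 0 < a := by
    rcases ha0.lt_or_eq with h | h
    · exact h
    · exfalso
      have hb : b = 0 := abs_nonpos_iff.mp (by rw [← h] at hab; exact hab)
      apply hz
      simp [hzdef, ← h, hb]
  -- |z| ≤ a
  have habs : ‖z‖ ≤ a := by
    have hsq : Complex.normSq z ≤ a ^ 2 := by
      have hb2 : b ^ 2 ≤ a ^ 2 := by
        have := _root_.sq_abs b ▸ pow_le_pow_left₀ (abs_nonneg b) hab 2
        simpa using this
      have h1 : Complex.normSq z
          = a ^ 2 * Real.sin θ ^ 2 + b ^ 2 * Real.cos θ ^ 2 := by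
        simp [Complex.normSq_apply, hre, him]; ring
      have h2 : a ^ 2 * Real.sin θ ^ 2 + b ^ 2 * Real.cos θ ^ 2
          ≤ a ^ 2 * Real.sin θ ^ 2 + a ^ 2 * Real.cos θ ^ 2 := by
        have := mul_le_mul_of_nonneg_right hb2 (sq_nonneg (Real.cos θ))
        linarith
      have h3 : a ^ 2 * Real.sin θ ^ 2 + a ^ 2 * Real.cos θ ^ 2 = a ^ 2 := by
        have := Real.sin_sq_add_cos_sq θ
        nlinarith [this]
      linarith
    calc ‖z‖ = Real.sqrt (Complex.normSq z) := Complex.norm_def z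
    _ ≤ Real.sqrt (a ^ 2) := Real.sqrt_le_sqrt hsq
    _ = a := by rw [Real.sqrt_sq ha0]
  have habspos : 0 < ‖z‖ := norm_pos_iff.mpr hz
  -- cos (arg z) ≤ - sin θ
  have hcos : Real.cos z.arg ≤ -Real.sin θ := by
    rw [Complex.cos_arg hz, hre]
    rw [neg_div, le_neg, neg_neg]
    calc Real.sin θ = a * Real.sin θ / a := by field_simp
    _ ≤ a * Real.sin θ / ‖z‖ :=
        div_le_div_of_nonneg_left (by positivity) habspos habs
  -- sin of the min equals sin θ
  have hsinmin : Real.sin (min θ (Real.pi - θ)) = Real.sin θ := by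
    rcases min_cases θ (Real.pi - θ) with ⟨h, _⟩ | ⟨h, _⟩
    · rw [h]
    · rw [h, Real.sin_pi_sub]
  have hmin_le : min θ (Real.pi - θ) ≤ Real.pi / 2 := by
    rcases le_total θ (Real.pi / 2) with h | h
    · exact le_trans (min_le_left _ _) h
    · exact le_trans (min_le_right _ _) (by linarith)
  have hmin_pos : 0 < min θ (Real.pi - θ) := lt_min hθ0 (by linarith)
  have hcos2 : Real.cos |z.arg| ≤ Real.cos (Real.pi / 2 + min θ (Real.pi - θ)) := by
    have : Real.cos (Real.pi / 2 + min θ (Real.pi - θ)) = -Real.sin θ := by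
      rw [Real.cos_add, Real.cos_pi_div_two, Real.sin_pi_div_two, hsinmin]; ring
    rw [Real.cos_abs, this]
    exact hcos
  have h1 : Real.pi / 2 + min θ (Real.pi - θ) ∈ Set.Icc 0 Real.pi := by
    constructor <;> [positivity; linarith]
  have h2 : |z.arg| ∈ Set.Icc 0 Real.pi :=
    ⟨abs_nonneg _, Complex.abs_arg_le_pi z⟩
  exact (Real.strictAntiOn_cos.le_iff_ge h2 h1).mp hcos2
end

section
/- Finite-dimensional version of Proposition 4(b) (spectrum of the lapse-Wick-rotated Hessian lies in a wedge of the left half plane): let n ≥ 1, let P and Q be Hermitian n×n complex matrices such that P − Q and P + Q are both positive semidefinite, let θ ∈ (0, π), and set θ̃ := min(θ, π − θ) and Δ_θ := −sin θ·P − i cos θ·Q. Then every nonzero eigenvalue λ of Δ_θ (i.e. every λ ≠ 0 for which there exists v ≠ 0 with Δ_θ v = λ v) satisfies |arg λ| ≥ π/2 + θ̃, where arg is the principal argument valued in (−π, π]. Consequently every nonzero eigenvalue μ of −iΔ_θ lies in the closed wedge of the upper half plane with |arg(iμ)| ≥ π/2 + θ̃. -/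
open Matrix Complex
open scoped ComplexOrder

lemma wedge_aux (n : ℕ)
    (P Q : Matrix (Fin n) (Fin n) ℂ)
    (hPmQ : (P - Q).PosSemidef) (hPpQ : (P + Q).PosSemidef)
    (θ : ℝ) (hθ : θ ∈ Set.Ioo 0 Real.pi) :
    ∀ lam : ℂ, lam ≠ 0 → ∀ v : Fin n → ℂ, v ≠ 0 →
      ((-(Real.sin θ : ℂ)) • P - (Complex.I * (Real.cos θ : ℂ)) • Q).mulVec v = lam • v →
      Real.pi / 2 + min θ (Real.pi - θ) ≤ |lam.arg| := by
  obtain ⟨hθ0, hθπ⟩ := hθ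
  set s := Real.sin θ with hs
  set co := Real.cos θ with hco
  have hspos : 0 < s := Real.sin_pos_of_pos_of_lt_pi hθ0 hθπ
  set t := min θ (Real.pi - θ) with ht
  have ht0 : 0 < t := lt_min hθ0 (by linarith)
  have htle : t ≤ Real.pi / 2 := by
    rcases le_total θ (Real.pi - θ) with h | h
    · rw [ht, min_eq_left h]; linarith
    · rw [ht, min_eq_right h]; linarith
  have hsint : Real.sin t = s := by
    rcases le_total θ (Real.pi - θ) with h | h
    · rw [ht, min_eq_left h]
    · rw [ht, min_eq_right h, Real.sin_pi_sub]
  intro lam hlam v hv heig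
  have hc : (0:ℂ) < star v ⬝ᵥ v := Matrix.dotProduct_star_self_pos_iff.mpr hv
  set c := star v ⬝ᵥ v with hcdef
  rw [Complex.lt_def] at hc
  obtain ⟨hcre, hcim⟩ := hc
  simp only [Complex.zero_re, Complex.zero_im] at hcre hcim
  set zp := star v ⬝ᵥ P.mulVec v with hzp
  set zq := star v ⬝ᵥ Q.mulVec v with hzq
  have hm := hPmQ.dotProduct_mulVec_nonneg v
  have hp := hPpQ.dotProduct_mulVec_nonneg v
  rw [Matrix.sub_mulVec, dotProduct_sub, Complex.le_def] at hm
  rw [Matrix.add_mulVec, dotProduct_add, Complex.le_def] at hp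
  obtain ⟨hm1, hm2⟩ := hm
  obtain ⟨hp1, hp2⟩ := hp
  simp only [Complex.zero_re, Complex.zero_im, Complex.sub_re, Complex.sub_im,
    Complex.add_re, Complex.add_im, ← hzp, ← hzq] at hm1 hm2 hp1 hp2
  have hqim : zq.im = 0 := by linarith
  have hpim : zp.im = 0 := by linarith
  have hqlep : |zq.re| ≤ zp.re := abs_le.mpr ⟨by linarith, by linarith⟩
  have heq : lam * c = -(s:ℂ) * zp - Complex.I * (co:ℂ) * zq := by
    have h1 : star v ⬝ᵥ (((-(s : ℂ)) • P - (Complex.I * (co : ℂ)) • Q).mulVec v)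
        = star v ⬝ᵥ (lam • v) := by rw [heig]
    simp only [Matrix.sub_mulVec, dotProduct_sub, Matrix.smul_mulVec,
      dotProduct_smul, smul_eq_mul, ← hzp, ← hzq, ← hcdef] at h1
    linear_combination -h1
  have heqre : lam.re * c.re = -(s * zp.re) := by
    have := congrArg Complex.re heq
    simp only [Complex.mul_re, Complex.mul_im, Complex.sub_re, Complex.neg_re, Complex.neg_im,
      Complex.ofReal_re, Complex.ofReal_im, Complex.I_re, Complex.I_im, ← hcim, hpim, hqim] at this
    linarith [this]
  have heqim : lam.im * c.re = -(co * zq.re) := by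
    have := congrArg Complex.im heq
    simp only [Complex.mul_re, Complex.mul_im, Complex.sub_im, Complex.neg_re, Complex.neg_im,
      Complex.ofReal_re, Complex.ofReal_im, Complex.I_re, Complex.I_im, ← hcim, hpim, hqim] at this
    linarith [this]
  have hzppos : 0 < zp.re := by
    by_contra hle
    push_neg at hle
    have hzp0 : zp.re = 0 := le_antisymm hle ((abs_nonneg _).trans hqlep)
    have hzq0 : zq.re = 0 := by
      have : |zq.re| ≤ 0 := hzp0 ▸ hqlep
      exact abs_nonpos_iff.mp this
    apply hlam
    have hre : lam.re = 0 := by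
      have := heqre; rw [hzp0] at this
      have := mul_eq_zero.mp (by linarith : lam.re * c.re = 0)
      rcases this with h | h
      · exact h
      · exact absurd h (ne_of_gt hcre)
    have him : lam.im = 0 := by
      have := heqim; rw [hzq0] at this
      have := mul_eq_zero.mp (by linarith : lam.im * c.re = 0)
      rcases this with h | h
      · exact h
      · exact absurd h (ne_of_gt hcre)
    exact Complex.ext hre him
  have hre_neg : lam.re < 0 := by nlinarith [mul_pos hspos hzppos]
  have habs2 : (‖lam‖)^2 = lam.re^2 + lam.im^2 := by
    rw [Complex.sq_norm, Complex.normSq_apply]; ring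
  have hsq2 : zq.re^2 ≤ zp.re^2 := by
    have h := abs_le.mp hqlep
    nlinarith [h.1, h.2]
  have pyth : s^2 + co^2 = 1 := Real.sin_sq_add_cos_sq θ
  have hsq : (s * ‖lam‖)^2 * c.re^2 ≤ (-lam.re)^2 * c.re^2 := by
    have expand : (s * ‖lam‖)^2 * c.re^2
        = s^2 * ((lam.re * c.re)^2 + (lam.im * c.re)^2) := by
      rw [mul_pow, habs2]; ring
    have expand2 : (-lam.re)^2 * c.re^2 = (lam.re * c.re)^2 := by ring
    rw [expand, expand2, heqre, heqim]
    have key1 : s^2*co^2*zq.re^2 ≤ s^2*co^2*zp.re^2 :=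
      mul_le_mul_of_nonneg_left hsq2 (by positivity)
    have key2 : s^2*s^2*zp.re^2 + s^2*co^2*zp.re^2 = s^2*zp.re^2 := by
      linear_combination (s^2*zp.re^2) * pyth
    linarith [key1, key2]
  have h2 : (s * ‖lam‖)^2 ≤ (-lam.re)^2 :=
    le_of_mul_le_mul_right hsq (by positivity)
  have key : s * ‖lam‖ ≤ -lam.re := by
    have h3 := Real.sqrt_le_sqrt h2
    rwa [Real.sqrt_sq (by positivity), Real.sqrt_sq (by linarith)] at h3
  have habspos : 0 < ‖lam‖ := norm_pos_iff.mpr hlam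
  have hcosarg : Real.cos lam.arg ≤ -Real.sin t := by
    rw [Complex.cos_arg hlam, hsint, div_le_iff₀ habspos]
    nlinarith [key]
  by_contra hcon
  push_neg at hcon
  have hmem1 : |lam.arg| ∈ Set.Icc 0 Real.pi := ⟨abs_nonneg _, Complex.abs_arg_le_pi lam⟩
  have hmem2 : Real.pi / 2 + t ∈ Set.Icc 0 Real.pi := ⟨by linarith, by linarith⟩
  have hlt := Real.strictAntiOn_cos hmem1 hmem2 hcon
  have hcpt : Real.cos (Real.pi / 2 + t) = -Real.sin t := by
    rw [Real.cos_add, Real.cos_pi_div_two, Real.sin_pi_div_two]; ring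
  rw [Real.cos_abs, hcpt] at hlt
  linarith

/-- Finite-dimensional version of Proposition 4(b): the nonzero eigenvalues of the
lapse-Wick-rotated Hessian `Δ_θ = -sin θ·P - i cos θ·Q` lie in the closed wedge
`|arg λ| ≥ π/2 + min(θ, π-θ)` of the left half plane, and consequently every nonzero
eigenvalue `μ` of `-iΔ_θ` satisfies `|arg(iμ)| ≥ π/2 + min(θ, π-θ)`. -/
theorem lapse_wick_hessian_spectrum_wedge (n : ℕ) (hn : 1 ≤ n)
    (P Q : Matrix (Fin n) (Fin n) ℂ) (hP : P.IsHermitian) (hQ : Q.IsHermitian)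
    (hPmQ : (P - Q).PosSemidef) (hPpQ : (P + Q).PosSemidef)
    (θ : ℝ) (hθ : θ ∈ Set.Ioo 0 Real.pi) :
    (∀ lam : ℂ, lam ≠ 0 → ∀ v : Fin n → ℂ, v ≠ 0 →
      ((-(Real.sin θ : ℂ)) • P - (Complex.I * (Real.cos θ : ℂ)) • Q).mulVec v = lam • v →
      Real.pi / 2 + min θ (Real.pi - θ) ≤ |lam.arg|) ∧
    (∀ mu : ℂ, mu ≠ 0 → ∀ v : Fin n → ℂ, v ≠ 0 →
      ((-Complex.I) •
        ((-(Real.sin θ : ℂ)) • P - (Complex.I * (Real.cos θ : ℂ)) • Q)).mulVec v = mu • v →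
      Real.pi / 2 + min θ (Real.pi - θ) ≤ |(Complex.I * mu).arg|) := by
  have h1 := wedge_aux n P Q hPmQ hPpQ θ hθ
  refine ⟨h1, ?_⟩
  intro mu hmu v hv heq
  apply h1 (Complex.I * mu) (mul_ne_zero Complex.I_ne_zero hmu) v hv
  rw [Matrix.smul_mulVec] at heq
  have h2 := congrArg (fun w => (Complex.I : ℂ) • w) heq
  simpa [smul_smul, mul_neg, Complex.I_mul_I] using h2
end
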